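/- arXiv:1711.09014 — 9 statements merged into one kernel-verified Lean document; each statement's English description precedes it below -/
import Mathlib

section
/- Let G be a simple connected graph on n vertices having exactly p pendant vertices, where p ≥ 2 and n ≥ p + 3. Then Π2(G) ≤ (n−1)^{n−1} · (n−p−1)^{(n−p−1)^2}, with equality if and only if G is isomorphic to G_s, the graph obtained from the complete graph K_{n−p} by attaching all p pendant vertices to a single vertex of K_{n−p}. -/
open SimpleGraph Finset

/-- Degree of a vertex (as `Nat.card` of its neighbor set). -/
noncomputable def mdeg {V : Type*} (G : SimpleGraph V) (v : V) : ℕ :=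
  Nat.card (G.neighborSet v)

/-- First multiplicative Zagreb index. -/
noncomputable def mZ1 {V : Type*} [Fintype V] (G : SimpleGraph V) : ℕ :=
  ∏ v : V, (mdeg G v) ^ 2

/-- Second multiplicative Zagreb index. -/
noncomputable def mZ2 {V : Type*} [Fintype V] (G : SimpleGraph V) : ℕ :=
  ∏ v : V, (mdeg G v) ^ (mdeg G v)

/-- The graph `G_s`: the complete graph on the first `n - p` vertices, with all `p`
pendant vertices attached to vertex `0`. -/
def Gs (n p : ℕ) : SimpleGraph (Fin n) :=
  SimpleGraph.fromRel (fun u v =>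
    (u.val < n - p ∧ v.val < n - p) ∨ (u.val = 0 ∧ n - p ≤ v.val))

/-!
Pendant vertices contribute `1 ^ 1` to `Π₂`, and in a connected graph on at least three vertices
the neighbour of a pendant vertex is not pendant. So each of the `m + 1 = n - p` non-pendant
vertices `v` has degree at most `m + t v`, where `t v` counts its pendant neighbours and
`∑ t v = p`. Since `x ↦ x log x` is strictly convex,
`(m + a)^(m + a) (m + b)^(m + b) ≤ m^m (m + a + b)^(m + a + b)`, strictly when `a, b > 0`;
moving all pendant neighbours onto one vertex therefore only increases the bound, which gives
`Π₂ ≤ (m^m)^m (m + p)^(m + p)`. Equality forces every degree bound to be attained, so the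
non-pendant vertices form a clique, and it forces all pendant vertices onto a single hub: this
is `G_s`.
-/

lemma StrictConvexOn.map_add_add_map_add_lt {s : Set ℝ} {f : ℝ → ℝ}
    (hf : StrictConvexOn ℝ s f) {x a b : ℝ} (hx : x ∈ s) (hy : x + a + b ∈ s) (ha : 0 < a)
    (hb : 0 < b) :
    f (x + a) + f (x + b) < f x + f (x + a + b) := by
  have hne : x ≠ x + a + b := by intro h; linarith
  have hab : 0 < a + b := by positivity
  have hsum : b / (a + b) + a / (a + b) = 1 := by rw [← add_div, add_comm b, div_self hab.ne']
  -- `x + a` and `x + b` are the convex combinations of `x` and `x + a + b` with swapped weights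
  have h₁ := hf.2 hx hy hne (div_pos hb hab) (div_pos ha hab) hsum
  have h₂ := hf.2 hx hy hne (div_pos ha hab) (div_pos hb hab) ((add_comm _ _).trans hsum)
  have e₁ : (b / (a + b)) • x + (a / (a + b)) • (x + a + b) = x + a := by
    simp only [smul_eq_mul]; field_simp; ring
  have e₂ : (a / (a + b)) • x + (b / (a + b)) • (x + a + b) = x + b := by
    simp only [smul_eq_mul]; field_simp; ring
  rw [e₁, smul_eq_mul, smul_eq_mul] at h₁
  rw [e₂, smul_eq_mul, smul_eq_mul] at h₂
  linear_combination h₁ + h₂ + (f x + f (x + a + b)) * hsum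

lemma pow_self_mul_pow_self_lt {m a b : ℕ} (ha : 0 < a) (hb : 0 < b) :
    (m + a) ^ (m + a) * (m + b) ^ (m + b) < m ^ m * (m + a + b) ^ (m + a + b) := by
  have key := Real.strictConvexOn_mul_log.map_add_add_map_add_lt (Set.mem_Ici.mpr m.cast_nonneg)
    (Set.mem_Ici.mpr (by positivity)) (Nat.cast_pos.mpr ha) (Nat.cast_pos.mpr hb)
  have hpos (k : ℕ) : (0 : ℝ) < (k : ℝ) ^ k := by exact_mod_cast Nat.pow_self_pos
  rw [← Nat.cast_lt (α := ℝ)]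
  simp only [Nat.cast_mul, Nat.cast_pow]
  rw [← Real.log_lt_log_iff (mul_pos (hpos _) (hpos _)) (mul_pos (hpos _) (hpos _)),
    Real.log_mul (hpos _).ne' (hpos _).ne', Real.log_mul (hpos _).ne' (hpos _).ne']
  simp only [Real.log_pow]
  exact_mod_cast key

lemma pow_self_mul_pow_self_le (m a b : ℕ) :
    (m + a) ^ (m + a) * (m + b) ^ (m + b) ≤ m ^ m * (m + a + b) ^ (m + a + b) := by
  rcases Nat.eq_zero_or_pos a with rfl | ha
  · simp
  rcases Nat.eq_zero_or_pos b with rfl | hb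
  · simp [mul_comm]
  exact (pow_self_mul_pow_self_lt ha hb).le

lemma pow_self_le_pow_self {a b : ℕ} (h : a ≤ b) : a ^ a ≤ b ^ b := by
  rcases Nat.eq_zero_or_pos b with rfl | hb
  · rw [Nat.le_zero.mp h]
  · exact (Nat.pow_le_pow_left h a).trans (Nat.pow_le_pow_right hb h)

lemma pow_self_lt_pow_self {a b : ℕ} (h : a < b) (hb : 1 < b) : a ^ a < b ^ b :=
  (Nat.pow_le_pow_left h.le a).trans_lt (Nat.pow_lt_pow_right hb h)

-- Multiplied through by `m ^ m` to avoid the truncated exponent `#s - 1`.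
lemma prod_pow_self_mul_le {ι : Type*} (s : Finset ι) (m : ℕ) (t : ι → ℕ) :
    (∏ i ∈ s, (m + t i) ^ (m + t i)) * m ^ m ≤
      (m ^ m) ^ #s * (m + ∑ i ∈ s, t i) ^ (m + ∑ i ∈ s, t i) := by
  classical
  induction s using Finset.induction_on with
  | empty => simp
  | insert a s ha ih =>
    rw [prod_insert ha, sum_insert ha, card_insert_of_notMem ha, ← add_assoc]
    generalize ∑ i ∈ s, t i = S at ih ⊢
    generalize ∏ i ∈ s, (m + t i) ^ (m + t i) = P at ih ⊢
    calc (m + t a) ^ (m + t a) * P * m ^ m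
        ≤ (m + t a) ^ (m + t a) * ((m ^ m) ^ #s * (m + S) ^ (m + S)) := by
          rw [mul_assoc]; exact Nat.mul_le_mul_left _ ih
      _ = (m ^ m) ^ #s * ((m + t a) ^ (m + t a) * (m + S) ^ (m + S)) := by ring
      _ ≤ (m ^ m) ^ #s * (m ^ m * (m + t a + S) ^ (m + t a + S)) :=
          Nat.mul_le_mul_left _ (pow_self_mul_pow_self_le _ _ _)
      _ = (m ^ m) ^ (#s + 1) * (m + t a + S) ^ (m + t a + S) := by ring

lemma prod_pow_self_mul_lt {ι : Type*} [DecidableEq ι] {s : Finset ι} (m : ℕ) {t : ι → ℕ}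
    {i j : ι} (hi : i ∈ s) (hj : j ∈ s) (hij : i ≠ j) (hti : 0 < t i) (htj : 0 < t j) :
    (∏ k ∈ s, (m + t k) ^ (m + t k)) * m ^ m <
      (m ^ m) ^ #s * (m + ∑ k ∈ s, t k) ^ (m + ∑ k ∈ s, t k) := by
  have hS : 0 < ∑ k ∈ s.erase i, t k :=
    htj.trans_le (single_le_sum (fun _ _ => Nat.zero_le _) (mem_erase.mpr ⟨hij.symm, hj⟩))
  have ih := prod_pow_self_mul_le (s.erase i) m t
  rw [← insert_erase hi, prod_insert (notMem_erase i s), sum_insert (notMem_erase i s),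
    card_insert_of_notMem (notMem_erase i s), ← add_assoc]
  generalize ∑ k ∈ s.erase i, t k = S at hS ih ⊢
  generalize ∏ k ∈ s.erase i, (m + t k) ^ (m + t k) = P at ih ⊢
  calc (m + t i) ^ (m + t i) * P * m ^ m
      ≤ (m + t i) ^ (m + t i) * ((m ^ m) ^ #(s.erase i) * (m + S) ^ (m + S)) := by
        rw [mul_assoc]; exact Nat.mul_le_mul_left _ ih
    _ = (m ^ m) ^ #(s.erase i) * ((m + t i) ^ (m + t i) * (m + S) ^ (m + S)) := by ring
    _ < (m ^ m) ^ #(s.erase i) * (m ^ m * (m + t i + S) ^ (m + t i + S)) :=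
        Nat.mul_lt_mul_of_pos_left (pow_self_mul_pow_self_lt hti hS) (pow_pos Nat.pow_self_pos _)
    _ = (m ^ m) ^ (#(s.erase i) + 1) * (m + t i + S) ^ (m + t i + S) := by ring

lemma mdeg_eq_degree {V : Type*} (G : SimpleGraph V) (v : V) [Fintype (G.neighborSet v)] :
    mdeg G v = G.degree v := by
  rw [mdeg, Nat.card_eq_fintype_card, card_neighborSet_eq_degree]

lemma mZ2_congr {V W : Type*} [Fintype V] [Fintype W] {G : SimpleGraph V} {H : SimpleGraph W}
    (e : G ≃g H) : mZ2 G = mZ2 H := by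
  rw [mZ2, mZ2, ← e.toEquiv.prod_comp]
  exact prod_congr rfl fun v _ => by rw [mdeg, mdeg, Nat.card_congr (e.mapNeighborSet v)]; rfl

namespace SimpleGraph

variable {V : Type*}

section Neighbors

variable (G : SimpleGraph V) [DecidableEq V] [DecidableRel G.Adj]

lemma card_filter_adj_le {s : Finset V} {v : V} (hv : v ∈ s) :
    #{u ∈ s | G.Adj v u} ≤ #s - 1 := by
  rw [← card_erase_of_mem hv]
  exact card_le_card fun u hu => mem_erase.mpr ⟨(mem_filter.mp hu).2.ne', (mem_filter.mp hu).1⟩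

lemma adj_of_card_filter_adj_eq {s : Finset V} {v : V} (hv : v ∈ s)
    (h : #{u ∈ s | G.Adj v u} = #s - 1) {u : V} (hu : u ∈ s) (huv : u ≠ v) : G.Adj v u := by
  have hsub : {u ∈ s | G.Adj v u} ⊆ s.erase v :=
    fun u hu => mem_erase.mpr ⟨(mem_filter.mp hu).2.ne', (mem_filter.mp hu).1⟩
  have heq := eq_of_subset_of_card_le hsub (by rw [card_erase_of_mem hv, h])
  exact (mem_filter.mp (heq ▸ mem_erase.mpr ⟨huv, hu⟩)).2

end Neighbors

lemma eq_of_adj_of_degree_eq_one {G : SimpleGraph V} {u a b : V} [Fintype (G.neighborSet u)]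
    (hu : G.degree u = 1) (ha : G.Adj u a) (hb : G.Adj u b) : a = b :=
  (degree_eq_one_iff_existsUnique_adj.mp hu).unique ha hb

lemma Connected.degree_ne_one_of_adj [Fintype V] {G : SimpleGraph V} [DecidableRel G.Adj]
    (hG : G.Connected) (hV : 3 ≤ Fintype.card V) {u w : V} (hu : G.degree u = 1)
    (huw : G.Adj u w) : G.degree w ≠ 1 := by
  classical
  intro hw
  obtain ⟨z, hz⟩ : ∃ z, z ∉ ({u, w} : Finset V) := by
    by_contra! h
    have := card_le_card (fun z _ => h z : univ ⊆ {u, w})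
    have := card_le_two (a := u) (b := w)
    rw [card_univ] at *
    omega
  -- `{u, w}` would be closed under adjacency, so a walk from `u` to `z` could never leave it
  obtain ⟨d, -, hd, hd'⟩ := (hG.preconnected u z).some.exists_boundary_dart
    {u, w} (by simp) (by simpa using hz)
  simp only [Set.mem_insert_iff, Set.mem_singleton_iff] at hd hd'
  rcases hd with hd | hd
  · exact hd' (.inr (eq_of_adj_of_degree_eq_one hu (hd ▸ d.adj) huw))
  · exact hd' (.inl (eq_of_adj_of_degree_eq_one hw (hd ▸ d.adj) huw.symm))

section Pendants

variable (G : SimpleGraph V) [Fintype V] [DecidableRel G.Adj]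

def pendants : Finset V := {v | G.degree v = 1}

def pendantDegree (v : V) : ℕ := #{u ∈ G.pendants | G.Adj v u}

lemma card_pendants : #G.pendants = Nat.card {v | mdeg G v = 1} := by
  simp only [pendants, mdeg_eq_degree, Nat.card_eq_fintype_card, Fintype.card_subtype,
    Set.mem_ofPred_eq]

variable [DecidableEq V]

lemma mZ2_eq_prod_compl_pendants : mZ2 G = ∏ v ∈ G.pendantsᶜ, G.degree v ^ G.degree v := by
  rw [mZ2, ← prod_mul_prod_compl G.pendants, prod_eq_one, one_mul]
  · simp only [mdeg_eq_degree]
  · intro v hv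
    rw [mdeg_eq_degree, (mem_filter.mp hv).2, pow_one]

lemma degree_eq_card_filter_adj_add_pendantDegree (v : V) :
    G.degree v = #{u ∈ G.pendantsᶜ | G.Adj v u} + G.pendantDegree v := by
  rw [pendantDegree, ← card_union_of_disjoint
    (disjoint_filter_filter disjoint_compl_left), ← card_neighborFinset_eq_degree]
  congr 1
  ext u
  simp only [mem_neighborFinset, mem_union, mem_filter, mem_compl]
  tauto

lemma degree_le_add_pendantDegree {m : ℕ} (hC : #G.pendantsᶜ = m + 1) {v : V}
    (hv : v ∈ G.pendantsᶜ) : G.degree v ≤ m + G.pendantDegree v := by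
  have := G.card_filter_adj_le hv
  rw [G.degree_eq_card_filter_adj_add_pendantDegree v]
  omega

variable {G}

lemma Connected.sum_pendantDegree (hG : G.Connected) (hV : 3 ≤ Fintype.card V) :
    ∑ v ∈ G.pendantsᶜ, G.pendantDegree v = #G.pendants := by
  refine (sum_card_bipartiteAbove_eq_sum_card_bipartiteBelow G.Adj).trans ?_
  rw [card_eq_sum_ones]
  refine sum_congr rfl fun u hu => ?_
  have hu1 : G.degree u = 1 := (mem_filter.mp hu).2
  rw [← hu1, ← card_neighborFinset_eq_degree]
  congr 1
  ext v
  simp only [mem_bipartiteBelow, mem_compl, mem_neighborFinset]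
  exact ⟨fun ⟨_, hvu⟩ => hvu.symm, fun huv =>
    ⟨fun hv => hG.degree_ne_one_of_adj hV hu1 huv (mem_filter.mp hv).2, huv.symm⟩⟩

end Pendants

section HubGraph

def hubGraph (C : Finset V) (h : V) : SimpleGraph V :=
  fromRel fun a b => (a ∈ C ∧ b ∈ C) ∨ (a = h ∧ b ∉ C)

variable {C : Finset V} {h : V}

lemma hubGraph_adj {a b : V} :
    (hubGraph C h).Adj a b ↔
      a ≠ b ∧ ((a ∈ C ∧ b ∈ C) ∨ (a = h ∧ b ∉ C) ∨ (b = h ∧ a ∉ C)) := by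
  simp only [hubGraph, fromRel_adj]
  tauto

lemma eq_hubGraph [Fintype V] {G : SimpleGraph V} [DecidableRel G.Adj]
    (hC : ∀ a ∈ C, ∀ b ∈ C, a ≠ b → G.Adj a b) (hpend : ∀ u ∉ C, G.degree u = 1)
    (hh : ∀ u ∉ C, G.Adj h u) : G = hubGraph C h := by
  have hout {u v : V} (hu : u ∉ C) (huv : G.Adj u v) : v = h :=
    eq_of_adj_of_degree_eq_one (hpend u hu) huv (hh u hu).symm
  ext a b
  rw [hubGraph_adj]
  constructor
  · intro hab
    refine ⟨hab.ne, ?_⟩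
    by_cases ha : a ∈ C <;> by_cases hb : b ∈ C
    · exact .inl ⟨ha, hb⟩
    · exact .inr (.inl ⟨hout hb hab.symm, hb⟩)
    · exact .inr (.inr ⟨hout ha hab, ha⟩)
    · exact absurd ((hout hb hab.symm).trans (hout ha hab).symm) hab.ne
  · rintro ⟨hne, ⟨ha, hb⟩ | ⟨rfl, hb⟩ | ⟨rfl, ha⟩⟩
    · exact hC a ha b hb hne
    · exact hh b hb
    · exact (hh a ha).symm

variable [Fintype V] [DecidableEq V]

lemma mZ2_hubGraph (hh : h ∈ C) :
    mZ2 (hubGraph C h) =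
      (Fintype.card V - 1) ^ (Fintype.card V - 1) * ((#C - 1) ^ (#C - 1)) ^ (#C - 1) := by
  classical
  have hnbr_hub (u : V) : (hubGraph C h).Adj h u ↔ u ∈ univ.erase h := by
    grind [hubGraph_adj]
  have hnbr_clique (v : V) (hv : v ∈ C.erase h) (u : V) :
      (hubGraph C h).Adj v u ↔ u ∈ C.erase v := by
    grind [hubGraph_adj]
  have hnbr_pend (v : V) (hv : v ∈ Cᶜ) (u : V) :
      (hubGraph C h).Adj v u ↔ u ∈ ({h} : Finset V) := by
    grind [hubGraph_adj, mem_compl]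
  have hmdeg {v : V} {s : Finset V} (hs : ∀ u, (hubGraph C h).Adj v u ↔ u ∈ s) :
      mdeg (hubGraph C h) v = #s := by
    rw [mdeg_eq_degree, ← card_neighborFinset_eq_degree]
    congr 1
    ext u
    rw [mem_neighborFinset, hs]
  have hclique : ∏ v ∈ C.erase h, mdeg (hubGraph C h) v ^ mdeg (hubGraph C h) v =
      ((#C - 1) ^ (#C - 1)) ^ (#C - 1) := by
    rw [← card_erase_of_mem hh, ← prod_const]
    refine prod_congr rfl fun v hv => ?_
    rw [hmdeg (hnbr_clique v hv), card_erase_of_mem (mem_of_mem_erase hv), card_erase_of_mem hh]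
  have hpend : ∏ v ∈ Cᶜ, mdeg (hubGraph C h) v ^ mdeg (hubGraph C h) v = 1 :=
    prod_eq_one fun v hv => by rw [hmdeg (hnbr_pend v hv), card_singleton, pow_one]
  rw [mZ2, ← prod_mul_prod_compl C, ← mul_prod_erase C _ hh, hclique, hpend, hmdeg hnbr_hub,
    card_erase_of_mem (mem_univ h), card_univ, mul_one]

lemma nonempty_hubGraph_iso {C' : Finset V} {h' : V} (hh : h ∈ C) (hh' : h' ∈ C')
    (hC : #C = #C') : Nonempty (hubGraph C h ≃g hubGraph C' h') := by
  let e₀ := C.equivOfCardEq hC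
  let σ := (e₀.trans (Equiv.swap (e₀ ⟨h, hh⟩) ⟨h', hh'⟩)).extendSubtype
  have hmem (a : V) : σ a ∈ C' ↔ a ∈ C := by
    by_cases ha : a ∈ C
    · exact iff_of_true (Equiv.extendSubtype_mem _ a ha) ha
    · exact iff_of_false (Equiv.extendSubtype_not_mem _ a ha) ha
  have hσh : σ h = h' := by
    simp [σ, Equiv.extendSubtype_apply_of_mem _ h hh]
  refine ⟨⟨σ, fun {a b} => ?_⟩⟩
  simp only [hubGraph_adj, hmem, ← hσh, σ.injective.eq_iff, σ.injective.ne_iff]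

end HubGraph

section Zagreb

variable [Fintype V] [DecidableEq V] {G : SimpleGraph V} [DecidableRel G.Adj] {m : ℕ}

lemma Connected.prod_compl_pendants_mul_le (hG : G.Connected) (hV : 3 ≤ Fintype.card V)
    (hC : #G.pendantsᶜ = m + 1) :
    (∏ v ∈ G.pendantsᶜ, (m + G.pendantDegree v) ^ (m + G.pendantDegree v)) * m ^ m ≤
      (m ^ m) ^ (m + 1) * (m + #G.pendants) ^ (m + #G.pendants) := by
  simpa only [hC, hG.sum_pendantDegree hV] using
    prod_pow_self_mul_le G.pendantsᶜ m G.pendantDegree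

lemma Connected.mZ2_le (hG : G.Connected) (hV : 3 ≤ Fintype.card V)
    (hC : #G.pendantsᶜ = m + 1) :
    mZ2 G ≤ (m ^ m) ^ m * (m + #G.pendants) ^ (m + #G.pendants) := by
  refine Nat.le_of_mul_le_mul_right ?_ (Nat.pow_self_pos (n := m))
  calc mZ2 G * m ^ m
      ≤ (∏ v ∈ G.pendantsᶜ, (m + G.pendantDegree v) ^ (m + G.pendantDegree v)) * m ^ m := by
        rw [mZ2_eq_prod_compl_pendants]
        exact Nat.mul_le_mul_right _
          (prod_le_prod' fun v hv => pow_self_le_pow_self (G.degree_le_add_pendantDegree hC hv))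
    _ ≤ (m ^ m) ^ (m + 1) * (m + #G.pendants) ^ (m + #G.pendants) :=
        hG.prod_compl_pendants_mul_le hV hC
    _ = (m ^ m) ^ m * (m + #G.pendants) ^ (m + #G.pendants) * m ^ m := by ring

variable (hG : G.Connected) (hV : 3 ≤ Fintype.card V) (hC : #G.pendantsᶜ = m + 1)
  (heq : mZ2 G = (m ^ m) ^ m * (m + #G.pendants) ^ (m + #G.pendants))
include hG hV hC heq

lemma Connected.degree_eq_of_mZ2_eq (hm : 2 ≤ m) {v : V} (hv : v ∈ G.pendantsᶜ) :
    G.degree v = m + G.pendantDegree v := by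
  have hle (u : V) (hu : u ∈ G.pendantsᶜ) := G.degree_le_add_pendantDegree hC hu
  by_contra hne
  have hlt :
      mZ2 G < ∏ u ∈ G.pendantsᶜ, (m + G.pendantDegree u) ^ (m + G.pendantDegree u) := by
    rw [mZ2_eq_prod_compl_pendants]
    exact prod_lt_prod (fun _ _ => Nat.pow_self_pos)
      (fun u hu => pow_self_le_pow_self (hle u hu))
      ⟨v, hv, pow_self_lt_pow_self ((hle v hv).lt_of_ne hne) (by omega)⟩
  have h := (Nat.mul_lt_mul_of_pos_right hlt (Nat.pow_self_pos (n := m))).trans_le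
    (hG.prod_compl_pendants_mul_le hV hC)
  rw [heq] at h
  exact h.ne (by ring)

lemma Connected.pendantDegree_eq_zero_or_of_mZ2_eq (hm : 2 ≤ m) {i j : V}
    (hi : i ∈ G.pendantsᶜ) (hj : j ∈ G.pendantsᶜ) (hij : i ≠ j) :
    G.pendantDegree i = 0 ∨ G.pendantDegree j = 0 := by
  by_contra! ⟨hti, htj⟩
  have hprod :
      mZ2 G = ∏ v ∈ G.pendantsᶜ, (m + G.pendantDegree v) ^ (m + G.pendantDegree v) := by
    rw [mZ2_eq_prod_compl_pendants]
    exact prod_congr rfl fun v hv => by rw [hG.degree_eq_of_mZ2_eq hV hC heq hm hv]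
  have hlt := prod_pow_self_mul_lt m hi hj hij (Nat.pos_of_ne_zero hti) (Nat.pos_of_ne_zero htj)
  rw [hC, hG.sum_pendantDegree hV, ← hprod, heq] at hlt
  exact hlt.ne (by ring)

lemma Connected.eq_hubGraph_of_mZ2_eq (hm : 2 ≤ m) (hk : 0 < #G.pendants) :
    ∃ h ∈ G.pendantsᶜ, G = hubGraph G.pendantsᶜ h := by
  obtain ⟨h, hh, hth⟩ :=
    exists_ne_zero_of_sum_ne_zero ((hG.sum_pendantDegree hV).trans_ne hk.ne')
  have hhub : G.pendantDegree h = #G.pendants := by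
    rw [← hG.sum_pendantDegree hV, sum_eq_single h
      (fun v hv hvh =>
        (hG.pendantDegree_eq_zero_or_of_mZ2_eq hV hC heq hm hv hh hvh).resolve_right hth)
      (fun h' => absurd hh h')]
  refine ⟨h, hh, eq_hubGraph (fun a ha b hb hab => ?_) (fun u hu => ?_) (fun u hu => ?_)⟩
  · have := G.degree_eq_card_filter_adj_add_pendantDegree a
    have := hG.degree_eq_of_mZ2_eq hV hC heq hm ha
    exact G.adj_of_card_filter_adj_eq ha (by omega) hb hab.symm
  · simpa [pendants] using hu
  · exact card_filter_eq_iff.mp hhub u (by simpa using hu)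

end Zagreb

end SimpleGraph

open SimpleGraph

lemma Gs_eq_hubGraph {n p : ℕ} (h : p < n) :
    Gs n p = hubGraph {v : Fin n | v < n - p} ⟨0, by omega⟩ := by
  ext a b
  simp only [Gs, hubGraph, fromRel_adj, mem_filter, mem_univ, true_and, Fin.ext_iff]
  omega

lemma mZ2_Gs {n p : ℕ} (h : p < n) :
    mZ2 (Gs n p) = (n - 1) ^ (n - 1) * (n - p - 1) ^ ((n - p - 1) ^ 2) := by
  rw [Gs_eq_hubGraph h, mZ2_hubGraph (by simp; omega), Fin.card_filter_val_lt, Fintype.card_fin,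
    min_eq_right (by omega), ← pow_mul, sq]

theorem stmt7 (n p : ℕ) (hp : 2 ≤ p) (hn : p + 3 ≤ n)
    (G : SimpleGraph (Fin n)) (hG : G.Connected)
    (hpend : Nat.card {v : Fin n | mdeg G v = 1} = p) :
    mZ2 G ≤ (n - 1) ^ (n - 1) * (n - p - 1) ^ ((n - p - 1) ^ 2) ∧
      (mZ2 G = (n - 1) ^ (n - 1) * (n - p - 1) ^ ((n - p - 1) ^ 2) ↔
        Nonempty (G ≃g Gs n p)) := by
  classical
  have hP : #G.pendants = p := G.card_pendants.trans hpend
  have hC : #G.pendantsᶜ = n - p - 1 + 1 := by rw [card_compl, hP, Fintype.card_fin]; omega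
  have hV : 3 ≤ Fintype.card (Fin n) := by rw [Fintype.card_fin]; omega
  have hbound : (n - 1) ^ (n - 1) * (n - p - 1) ^ ((n - p - 1) ^ 2) =
      ((n - p - 1) ^ (n - p - 1)) ^ (n - p - 1) *
        (n - p - 1 + #G.pendants) ^ (n - p - 1 + #G.pendants) := by
    rw [hP, ← pow_mul, ← sq, show n - p - 1 + p = n - 1 by omega, mul_comm]
  refine ⟨hbound ▸ hG.mZ2_le hV hC, fun heq => ?_,
    fun ⟨e⟩ => (mZ2_congr e).trans (mZ2_Gs (by omega))⟩
  obtain ⟨h, hh, hGh⟩ := hG.eq_hubGraph_of_mZ2_eq hV hC (heq.trans hbound) (by omega) (by omega)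
  rw [hGh, Gs_eq_hubGraph (by omega)]
  exact nonempty_hubGraph_iso hh (by simp; omega) (by rw [hC, Fin.card_filter_val_lt]; omega)
end

section
/- Let G be a simple connected graph on n vertices having exactly p pendant vertices, where p ≥ 2 and n ≥ p + 2. Then Π1(G) ≥ p^2 · 2^{2(n−p−1)}, with equality if and only if the degree sequence of G consists of one vertex of degree p, n−p−1 vertices of degree 2, and p vertices of degree 1 (i.e. G is a spider tree with p legs). -/
open SimpleGraph Finset

lemma SimpleGraph.Connected.one_le_mdeg {V : Type*} [Finite V] [Nontrivial V]
    {G : SimpleGraph V} (hG : G.Connected) (v : V) : 1 ≤ mdeg G v := by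
  have := Fintype.ofFinite V
  classical
  rw [mdeg_eq_degree]
  exact hG.preconnected.degree_pos_of_nontrivial v

lemma SimpleGraph.Connected.two_mul_card_sub_one_le_sum_mdeg {V : Type*} [Fintype V]
    {G : SimpleGraph V} (hG : G.Connected) : 2 * (Fintype.card V - 1) ≤ ∑ v, mdeg G v := by
  classical
  have hE := hG.card_vert_le_card_edgeSet_add_one
  rw [Nat.card_eq_fintype_card, Nat.card_eq_fintype_card, ← edgeFinset_card] at hE
  simp_rw [mdeg_eq_degree]
  rw [sum_degrees_eq_twice_card_edges]
  omega

section ProdAddTwo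

variable {α : Type*} (e : α → ℕ)

lemma two_pow_card_mul_sum_add_two_le_two_mul_prod (s : Finset α) :
    2 ^ #s * (∑ v ∈ s, e v + 2) ≤ 2 * ∏ v ∈ s, (e v + 2) := by
  induction s using Finset.cons_induction with
  | empty => simp
  | cons a s ha ih =>
    rw [card_cons, sum_cons, prod_cons]
    have hstep : 2 * (e a + ∑ v ∈ s, e v + 2) ≤ (e a + 2) * (∑ v ∈ s, e v + 2) := by
      nlinarith [Nat.zero_le (e a * ∑ v ∈ s, e v)]
    calc 2 ^ (#s + 1) * (e a + ∑ v ∈ s, e v + 2)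
        = 2 ^ #s * (2 * (e a + ∑ v ∈ s, e v + 2)) := by ring
      _ ≤ 2 ^ #s * ((e a + 2) * (∑ v ∈ s, e v + 2)) := by gcongr
      _ = (e a + 2) * (2 ^ #s * (∑ v ∈ s, e v + 2)) := by ring
      _ ≤ (e a + 2) * (2 * ∏ v ∈ s, (e v + 2)) := by gcongr
      _ = 2 * ((e a + 2) * ∏ v ∈ s, (e v + 2)) := by ring

variable {e}

lemma two_pow_card_mul_sum_add_two_lt_two_mul_prod {s : Finset α} {u w : α} (hu : u ∈ s)
    (hw : w ∈ s) (huw : u ≠ w) (heu : e u ≠ 0) (hew : e w ≠ 0) :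
    2 ^ #s * (∑ v ∈ s, e v + 2) < 2 * ∏ v ∈ s, (e v + 2) := by
  induction s using Finset.cons_induction with
  | empty => simp at hu
  | cons a s ha ih =>
    rw [card_cons, sum_cons, prod_cons]
    set S := ∑ v ∈ s, e v
    set P := ∏ v ∈ s, (e v + 2)
    have hstep : 2 * (e a + S + 2) ≤ (e a + 2) * (S + 2) := by nlinarith [Nat.zero_le (e a * S)]
    by_cases hboth : u ∈ s ∧ w ∈ s
    · calc 2 ^ (#s + 1) * (e a + S + 2)
          = 2 ^ #s * (2 * (e a + S + 2)) := by ring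
        _ ≤ 2 ^ #s * ((e a + 2) * (S + 2)) := by gcongr
        _ = (e a + 2) * (2 ^ #s * (S + 2)) := by ring
        _ < (e a + 2) * (2 * P) := Nat.mul_lt_mul_of_pos_left (ih hboth.1 hboth.2) (by omega)
        _ = 2 * ((e a + 2) * P) := by ring
    · obtain ⟨hea, x, hx, hex⟩ : e a ≠ 0 ∧ ∃ x ∈ s, e x ≠ 0 := by
        rw [mem_cons] at hu hw
        rcases hu with rfl | hu <;> rcases hw with rfl | hw
        exacts [absurd rfl huw, ⟨heu, w, hw, hew⟩, ⟨hew, u, hu, heu⟩, absurd ⟨hu, hw⟩ hboth]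
      have hS : e x ≤ S := single_le_sum (fun _ _ => Nat.zero_le _) hx
      have hstep' : 2 * (e a + S + 2) < (e a + 2) * (S + 2) := by
        nlinarith [Nat.mul_pos (Nat.pos_of_ne_zero hea) (Nat.pos_of_ne_zero hex)]
      calc 2 ^ (#s + 1) * (e a + S + 2)
          = 2 ^ #s * (2 * (e a + S + 2)) := by ring
        _ < 2 ^ #s * ((e a + 2) * (S + 2)) := by gcongr
        _ = (e a + 2) * (2 ^ #s * (S + 2)) := by ring
        _ ≤ (e a + 2) * (2 * P) :=
          Nat.mul_le_mul_left _ (two_pow_card_mul_sum_add_two_le_two_mul_prod e s)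
        _ = 2 * ((e a + 2) * P) := by ring

lemma exists_forall_ne_eq_zero_of_two_mul_prod_le {s : Finset α} (hs : s.Nonempty)
    (h : 2 * ∏ v ∈ s, (e v + 2) ≤ 2 ^ #s * (∑ v ∈ s, e v + 2)) :
    ∃ w ∈ s, ∀ v ∈ s, v ≠ w → e v = 0 := by
  by_contra! H
  obtain ⟨w, hw⟩ := hs
  obtain ⟨u, hu, huw, heu⟩ := H w hw
  obtain ⟨x, hx, hxu, hex⟩ := H u hu
  exact (two_pow_card_mul_sum_add_two_lt_two_mul_prod hx hu hxu hex heu).not_ge h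

end ProdAddTwo

section DegreeSequence

variable {V : Type*} [Fintype V] {d : V → ℕ} {p : ℕ}

lemma card_filter_ne_one (hp : #{v | d v = 1} = p) :
    #{v | d v ≠ 1} = Fintype.card V - p := by
  rw [← hp, ← card_univ, ← card_filter_add_card_filter_not (s := univ) (fun v => d v = 1),
    Nat.add_sub_cancel_left]

lemma prod_eq_prod_filter_ne_one_sub_two_add_two (hd : ∀ v, 1 ≤ d v) :
    ∏ v, d v = ∏ v with d v ≠ 1, (d v - 2 + 2) := by
  rw [← prod_filter_ne_one]
  refine prod_congr rfl fun v hv => ?_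
  have := hd v
  have := (mem_filter.1 hv).2
  omega

lemma le_sum_filter_ne_one_sub_two_add_two (hd : ∀ v, 1 ≤ d v)
    (hsum : 2 * (Fintype.card V - 1) ≤ ∑ v, d v) (hp : #{v | d v = 1} = p)
    (hpV : p < Fintype.card V) :
    p ≤ ∑ v with d v ≠ 1, (d v - 2) + 2 := by
  have hpendant : ∑ v with d v = 1, d v = p := by
    rw [sum_congr rfl fun v hv => (mem_filter.1 hv).2, sum_const, smul_eq_mul, mul_one, hp]
  have hrest : ∑ v with d v ≠ 1, d v = ∑ v with d v ≠ 1, (d v - 2) + 2 * #{v | d v ≠ 1} := by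
    rw [mul_comm, ← smul_eq_mul, ← sum_const, ← sum_add_distrib]
    refine sum_congr rfl fun v hv => ?_
    have := hd v
    have := (mem_filter.1 hv).2
    omega
  rw [← sum_filter_add_sum_filter_not univ (fun v => d v = 1), hpendant, hrest,
    card_filter_ne_one hp] at hsum
  omega

lemma two_pow_mul_sum_le_two_mul_prod (hd : ∀ v, 1 ≤ d v) (hp : #{v | d v = 1} = p) :
    2 ^ (Fintype.card V - p) * (∑ v with d v ≠ 1, (d v - 2) + 2) ≤ 2 * ∏ v, d v := by
  rw [← card_filter_ne_one hp, prod_eq_prod_filter_ne_one_sub_two_add_two hd]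
  exact two_pow_card_mul_sum_add_two_le_two_mul_prod _ _

lemma mul_two_pow_le_prod (hd : ∀ v, 1 ≤ d v) (hsum : 2 * (Fintype.card V - 1) ≤ ∑ v, d v)
    (hp : #{v | d v = 1} = p) (hpV : p < Fintype.card V) :
    p * 2 ^ (Fintype.card V - p - 1) ≤ ∏ v, d v := by
  refine Nat.le_of_mul_le_mul_left ?_ two_pos
  calc 2 * (p * 2 ^ (Fintype.card V - p - 1))
      = 2 ^ (Fintype.card V - p) * p := by rw [← mul_pow_sub_one (show Fintype.card V - p ≠ 0 by omega) 2]; ring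
    _ ≤ 2 ^ (Fintype.card V - p) * (∑ v with d v ≠ 1, (d v - 2) + 2) :=
      Nat.mul_le_mul_left _ (le_sum_filter_ne_one_sub_two_add_two hd hsum hp hpV)
    _ ≤ 2 * ∏ v, d v := two_pow_mul_sum_le_two_mul_prod hd hp

lemma exists_eq_and_forall_ne_of_prod_eq (hd : ∀ v, 1 ≤ d v)
    (hsum : 2 * (Fintype.card V - 1) ≤ ∑ v, d v) (hp : #{v | d v = 1} = p)
    (hpV : p < Fintype.card V) (heq : ∏ v, d v = p * 2 ^ (Fintype.card V - p - 1)) :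
    ∃ w, d w = p ∧ ∀ v, v ≠ w → d v = 1 ∨ d v = 2 := by
  have hTne : ({v | d v ≠ 1} : Finset V).Nonempty :=
    card_pos.1 (by rw [card_filter_ne_one hp]; omega)
  have hpow : 2 * (p * 2 ^ (Fintype.card V - p - 1)) = 2 ^ (Fintype.card V - p) * p := by
    rw [← mul_pow_sub_one (show Fintype.card V - p ≠ 0 by omega) 2]; ring
  have hkey := two_pow_mul_sum_le_two_mul_prod hd hp
  rw [heq, hpow] at hkey
  have hsum_eq : ∑ v with d v ≠ 1, (d v - 2) + 2 = p :=
    le_antisymm (Nat.le_of_mul_le_mul_left hkey (by positivity))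
      (le_sum_filter_ne_one_sub_two_add_two hd hsum hp hpV)
  have htight : 2 * ∏ v with d v ≠ 1, (d v - 2 + 2) ≤
      2 ^ #{v | d v ≠ 1} * (∑ v with d v ≠ 1, (d v - 2) + 2) := by
    rw [← prod_eq_prod_filter_ne_one_sub_two_add_two hd, heq, hpow, hsum_eq,
      card_filter_ne_one hp]
  obtain ⟨w, hwT, hzero⟩ := exists_forall_ne_eq_zero_of_two_mul_prod_le hTne htight
  rw [sum_eq_single_of_mem w hwT hzero] at hsum_eq
  refine ⟨w, ?_, fun v hvw => ?_⟩
  · have := (mem_filter.1 hwT).2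
    have := hd w
    omega
  · by_cases hv1 : d v = 1
    · exact Or.inl hv1
    · have := hzero v (mem_filter.2 ⟨mem_univ v, hv1⟩) hvw
      have := hd v
      omega

lemma prod_eq_of_forall_ne (hp2 : 2 ≤ p) (hp : #{v | d v = 1} = p) {w : V} (hw : d w = p)
    (hother : ∀ v, v ≠ w → d v = 1 ∨ d v = 2) :
    ∏ v, d v = p * 2 ^ (Fintype.card V - p - 1) := by
  classical
  have hwT : w ∈ ({v | d v ≠ 1} : Finset V) := mem_filter.2 ⟨mem_univ w, by omega⟩
  have htwo : ∀ v ∈ ({v | d v ≠ 1} : Finset V).erase w, d v = 2 := fun v hv =>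
    (hother v (ne_of_mem_erase hv)).resolve_left (mem_filter.1 (mem_of_mem_erase hv)).2
  rw [← prod_filter_ne_one, ← mul_prod_erase _ _ hwT, hw, prod_congr rfl htwo, prod_const,
    card_erase_of_mem hwT, card_filter_ne_one hp]

end DegreeSequence

theorem stmt8 (n p : ℕ) (hp : 2 ≤ p) (hn : p + 2 ≤ n)
    (G : SimpleGraph (Fin n)) (hG : G.Connected)
    (hpend : Nat.card {v : Fin n | mdeg G v = 1} = p) :
    p ^ 2 * 2 ^ (2 * (n - p - 1)) ≤ mZ1 G ∧
      (mZ1 G = p ^ 2 * 2 ^ (2 * (n - p - 1)) ↔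
        ∃ w : Fin n, mdeg G w = p ∧ ∀ v : Fin n, v ≠ w → mdeg G v = 1 ∨ mdeg G v = 2) := by
  have : Nontrivial (Fin n) := Fin.nontrivial_iff_two_le.2 (by omega)
  have hd := hG.one_le_mdeg
  have hsum := hG.two_mul_card_sub_one_le_sum_mdeg
  have hp' : #{v | mdeg G v = 1} = p := by
    rwa [Nat.card_eq_fintype_card, Fintype.card_subtype] at hpend
  have hpV : p < Fintype.card (Fin n) := by rw [Fintype.card_fin]; omega
  have hZ : mZ1 G = (∏ v, mdeg G v) ^ 2 := prod_pow _ _ _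
  have hbound : p ^ 2 * 2 ^ (2 * (n - p - 1)) = (p * 2 ^ (n - p - 1)) ^ 2 := by ring
  rw [hZ, hbound, pow_left_inj₀ (Nat.zero_le _) (Nat.zero_le _) two_ne_zero]
  have hle := mul_two_pow_le_prod hd hsum hp' hpV
  rw [Fintype.card_fin] at hle
  refine ⟨Nat.pow_le_pow_left hle 2, fun heq => ?_, fun ⟨w, hw, hother⟩ => ?_⟩
  · exact exists_eq_and_forall_ne_of_prod_eq hd hsum hp' hpV (by rwa [Fintype.card_fin])
  · simpa only [Fintype.card_fin] using prod_eq_of_forall_ne hp hp' hw hother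
end

section
/- Let G be a simple connected graph on n vertices having exactly p pendant vertices, where p ≥ 2 and n ≥ p + 2, and let k ≥ 2 and 0 ≤ r ≤ n−p−1 be the unique integers with 2n−p−2 = k(n−p) + r. Then Π2(G) ≥ (k+1)^{r(k+1)} · k^{k(n−p−r)}, with equality if and only if G is a tree whose degree sequence consists of r vertices of degree k+1, n−p−r vertices of degree k, and p vertices of degree 1. -/
/-
Pendant vertices contribute nothing to `Π₂ = ∏ d ^ d`, and since `G` is connected the remaining
`n - p` degrees sum to `2|E| - p ≥ 2n - 2 - p = k(n - p) + r`. As `x ↦ x log x` is strictly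
convex, on the integers it lies above its secant through `k` and `k + 1`, touching it only there.
Summing over the non-pendant vertices bounds `log Π₂ = ∑ d log d` below by the log of the claimed
bound, with equality iff `|E| = n - 1` and every non-pendant degree is `k` or `k + 1`.
-/

open SimpleGraph Finset

open Real

lemma StrictConvexOn.secant_lt {f : ℝ → ℝ} {s : Set ℝ} (hf : StrictConvexOn ℝ s f)
    {a x : ℝ} (ha : a ∈ s) (ha' : a + 1 ∈ s) (hx : x ∈ s) (hxa : x < a ∨ a + 1 < x) :
    f a + (x - a) * (f (a + 1) - f a) < f x := by
  rcases hxa with hxa | hxa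
  · have h := hf.slope_strict_mono_adjacent hx ha' hxa (lt_add_one a)
    rw [add_sub_cancel_left, div_one, div_lt_iff₀ (sub_pos.2 hxa)] at h
    linarith
  · have h := hf.slope_strict_mono_adjacent ha hx (lt_add_one a) hxa
    rw [add_sub_cancel_left, div_one, lt_div_iff₀ (sub_pos.2 hxa)] at h
    linarith

lemma secant_lt_mul_log {k x : ℕ} (hx : x ≠ k ∧ x ≠ k + 1) :
    k * log k + (x - k) * ((k + 1) * log (k + 1) - k * log k) < x * log x := by
  have hx : x < k ∨ k + 1 < x := by omega
  exact strictConvexOn_mul_log.secant_lt (Set.mem_Ici.2 k.cast_nonneg)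
    (Set.mem_Ici.2 (by positivity)) (Set.mem_Ici.2 x.cast_nonneg) (by exact_mod_cast hx)

lemma secant_eq_mul_log {k x : ℕ} (hx : x = k ∨ x = k + 1) :
    k * log k + (x - k) * ((k + 1) * log (k + 1) - k * log k) = x * log x := by
  rcases hx with rfl | rfl
  · ring
  · push_cast; ring

lemma secant_le_mul_log (k x : ℕ) :
    k * log k + (x - k) * ((k + 1) * log (k + 1) - k * log k) ≤ x * log x := by
  by_cases hx : x = k ∨ x = k + 1
  · exact (secant_eq_mul_log hx).le
  · exact (secant_lt_mul_log (not_or.1 hx)).le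

lemma mul_log_lt_succ_mul_log {k : ℕ} (hk : 0 < k) :
    (k : ℝ) * log k < (k + 1) * log (k + 1) := by
  have hk' : (1 : ℝ) ≤ k := by exact_mod_cast hk
  have : log k < log (k + 1) := log_lt_log (by positivity) (by linarith)
  nlinarith [log_nonneg hk']

section
variable {ι : Type*} (T : Finset ι) (d : ι → ℕ) {k r : ℕ}

lemma le_sum_mul_log_of_le_sum (hk : 0 < k) (hS : k * #T + r ≤ ∑ i ∈ T, d i) :
    #T * (k * log k) + r * ((k + 1) * log (k + 1) - k * log k) ≤ ∑ i ∈ T, d i * log (d i) ∧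
      (∑ i ∈ T, d i * log (d i) = #T * (k * log k) + r * ((k + 1) * log (k + 1) - k * log k) ↔
        ∑ i ∈ T, d i = k * #T + r ∧ ∀ i ∈ T, d i = k ∨ d i = k + 1) := by
  set Δ := (k + 1) * log (k + 1) - k * log k
  have hΔ : 0 < Δ := sub_pos.2 (mul_log_lt_succ_mul_log hk)
  set S := ∑ i ∈ T, d i
  have hsecant :
      ∑ i ∈ T, (k * log k + (d i - k) * Δ) = #T * (k * log k) + (S - k * #T : ℝ) * Δ := by
    rw [sum_add_distrib, sum_const, nsmul_eq_mul, ← sum_mul, sum_sub_distrib, sum_const,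
      nsmul_eq_mul, Nat.cast_sum]
    ring
  have hsecant_le : ∀ i ∈ T, k * log k + (d i - k) * Δ ≤ d i * log (d i) :=
    fun i _ => secant_le_mul_log k (d i)
  have hr : (r : ℝ) ≤ S - k * #T := by
    rw [le_sub_iff_add_le']; exact_mod_cast hS
  have hmono := sum_le_sum hsecant_le
  refine ⟨by nlinarith, fun heq => ⟨?_, fun i hi => ?_⟩, fun ⟨hsum, hdeg⟩ => ?_⟩
  · have hexcess : (S : ℝ) - k * #T = r := by nlinarith
    rw [sub_eq_iff_eq_add'] at hexcess
    exact_mod_cast hexcess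
  · have hterms : ∑ i ∈ T, (k * log k + (d i - k) * Δ) = ∑ i ∈ T, d i * log (d i) := by
      apply le_antisymm hmono; nlinarith
    by_contra hi'
    exact ((sum_eq_sum_iff_of_le hsecant_le).1 hterms i hi).not_lt
      (secant_lt_mul_log (not_or.1 hi'))
  · rw [← sum_congr rfl fun i hi => secant_eq_mul_log (hdeg i hi), hsecant, hsum]
    push_cast; ring

lemma pow_mul_pow_le_prod_pow_self (hk : 0 < k) (hr : r ≤ #T) (hS : k * #T + r ≤ ∑ i ∈ T, d i) :
    (k + 1) ^ (r * (k + 1)) * k ^ (k * (#T - r)) ≤ ∏ i ∈ T, d i ^ d i ∧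
      ((∏ i ∈ T, d i ^ d i) = (k + 1) ^ (r * (k + 1)) * k ^ (k * (#T - r)) ↔
        ∑ i ∈ T, d i = k * #T + r ∧ ∀ i ∈ T, d i = k ∨ d i = k + 1) := by
  set B := (k + 1) ^ (r * (k + 1)) * k ^ (k * (#T - r))
  have hB : 0 < (B : ℝ) := by positivity
  have hP : 0 < ((∏ i ∈ T, d i ^ d i : ℕ) : ℝ) := by
    exact_mod_cast prod_pos fun i _ => Nat.pow_self_pos
  have hlogB : log B = #T * (k * log k) + r * ((k + 1) * log (k + 1) - k * log k) := by
    rw [Nat.cast_mul, log_mul (by positivity) (by positivity)]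
    rw [Nat.cast_pow, Nat.cast_pow, log_pow, log_pow]
    push_cast [Nat.cast_sub hr]
    ring
  have hlogP : log (∏ i ∈ T, d i ^ d i : ℕ) = ∑ i ∈ T, d i * log (d i) := by
    push_cast
    rw [log_prod fun i _ => by exact_mod_cast Nat.pow_self_pos.ne']
    simp_rw [log_pow]
  obtain ⟨hle, heq⟩ := le_sum_mul_log_of_le_sum T d hk hS
  rw [← hlogB, ← hlogP] at hle heq
  refine ⟨by exact_mod_cast (log_le_log_iff hB hP).1 hle, Iff.trans ?_ heq⟩
  rw [← Nat.cast_inj (R := ℝ)]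
  exact ⟨congrArg log, fun h => log_injOn_pos hP hB h⟩

lemma sum_eq_mul_card_add_card_filter (h : ∀ i ∈ T, d i = k ∨ d i = k + 1) :
    ∑ i ∈ T, d i = k * #T + #{i ∈ T | d i = k + 1} := by
  have hd : ∀ i ∈ T, d i = k + if d i = k + 1 then 1 else 0 := fun i hi => by
    rcases h i hi with hi | hi <;> simp [hi]
  rw [sum_congr rfl hd, sum_add_distrib, sum_const, smul_eq_mul, sum_boole, Nat.cast_id,
    mul_comm]

lemma sum_eq_and_forall_eq_or_eq_succ_iff (hr : r ≤ #T) :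
    (∑ i ∈ T, d i = k * #T + r ∧ ∀ i ∈ T, d i = k ∨ d i = k + 1) ↔
      #{i ∈ T | d i = k + 1} = r ∧ #{i ∈ T | d i = k} = #T - r := by
  constructor
  · rintro ⟨hsum, hdeg⟩
    have hcompl : {i ∈ T | ¬d i = k + 1} = {i ∈ T | d i = k} :=
      filter_congr fun i hi => by have := hdeg i hi; omega
    have hsplit := card_filter_add_card_filter_not (s := T) (fun i => d i = k + 1)
    rw [hcompl] at hsplit
    have := sum_eq_mul_card_add_card_filter T d hdeg
    omega
  · rintro ⟨hsucc, hsame⟩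
    have hsplit := card_filter_add_card_filter_not (s := T) (fun i => d i = k + 1)
    have hcompl : {i ∈ T | d i = k} = {i ∈ T | ¬d i = k + 1} :=
      eq_of_subset_of_card_le (monotone_filter_right T fun i h => by omega) (by omega)
    have hdeg : ∀ i ∈ T, d i = k ∨ d i = k + 1 := fun i hi => by
      by_cases h : d i = k + 1
      · exact .inr h
      · have hi' : i ∈ {i ∈ T | d i = k} := hcompl ▸ mem_filter.2 ⟨hi, h⟩
        exact .inl (mem_filter.1 hi').2
    exact ⟨by rw [sum_eq_mul_card_add_card_filter T d hdeg, hsucc], hdeg⟩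
end

namespace SimpleGraph
variable {V : Type*} [Fintype V] (G : SimpleGraph V) [DecidableRel G.Adj]

lemma mdeg_eq_degree (v : V) : mdeg G v = G.degree v := by
  rw [mdeg, Nat.card_eq_fintype_card, card_neighborSet_eq_degree]

lemma natCard_mdeg_eq (c : ℕ) : Nat.card {v | mdeg G v = c} = #{v | G.degree v = c} := by
  simp_rw [mdeg_eq_degree]
  rw [Nat.card_eq_fintype_card, Fintype.card_subtype]
  rfl

def nonPendant : Finset V := {v | G.degree v ≠ 1}

lemma mZ2_eq_prod_nonPendant : mZ2 G = ∏ v ∈ G.nonPendant, G.degree v ^ G.degree v := by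
  rw [nonPendant,
    prod_filter_of_ne (p := (G.degree · ≠ 1)) fun v _ h hv => h (by rw [hv, pow_one])]
  exact prod_congr rfl fun v _ => by rw [mdeg_eq_degree]

lemma card_nonPendant_add : #G.nonPendant + #{v | G.degree v = 1} = Fintype.card V := by
  rw [add_comm, nonPendant, card_filter_add_card_filter_not, card_univ]

lemma sum_degree_nonPendant_add :
    ∑ v ∈ G.nonPendant, G.degree v + #{v | G.degree v = 1} = 2 * #G.edgeFinset := by
  rw [← sum_degrees_eq_twice_card_edges, ← sum_filter_not_add_sum_filter univ (G.degree · = 1),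
    card_eq_sum_ones, sum_congr rfl fun v hv => (mem_filter.1 hv).2]
  rfl

lemma filter_nonPendant_degree_eq {c : ℕ} (hc : c ≠ 1) :
    {v ∈ G.nonPendant | G.degree v = c} = ({v | G.degree v = c} : Finset V) := by
  ext v
  simp only [nonPendant, mem_filter, mem_univ, true_and]
  omega

end SimpleGraph

theorem stmt9_general (n p k r : ℕ) (hn : p + 2 ≤ n)
    (hk : 2 ≤ k) (hr : r ≤ n - p - 1) (hkr : 2 * n - p - 2 = k * (n - p) + r)
    (G : SimpleGraph (Fin n)) (hG : G.Connected)
    (hpend : Nat.card {v : Fin n | mdeg G v = 1} = p) :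
    (k + 1) ^ (r * (k + 1)) * k ^ (k * (n - p - r)) ≤ mZ2 G ∧
      (mZ2 G = (k + 1) ^ (r * (k + 1)) * k ^ (k * (n - p - r)) ↔
        (G.IsTree ∧ Nat.card {v : Fin n | mdeg G v = k + 1} = r ∧
          Nat.card {v : Fin n | mdeg G v = k} = n - p - r)) := by
  classical
  rw [natCard_mdeg_eq] at hpend
  have hT : #G.nonPendant = n - p := by
    have := G.card_nonPendant_add
    rw [hpend, Fintype.card_fin] at this
    omega
  have hsum := G.sum_degree_nonPendant_add
  rw [hpend] at hsum
  have hE : n ≤ #G.edgeFinset + 1 := by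
    have := hG.card_vert_le_card_edgeSet_add_one
    rwa [Nat.card_eq_fintype_card, Fintype.card_fin, Nat.card_eq_fintype_card,
      ← edgeFinset_card] at this
  obtain ⟨hle, heq⟩ := pow_mul_pow_le_prod_pow_self G.nonPendant (fun v => G.degree v) (k := k)
    (r := r) (by omega) (by omega) (by rw [hT]; omega)
  have htree : G.IsTree ↔ ∑ v ∈ G.nonPendant, G.degree v = k * #G.nonPendant + r := by
    rw [isTree_iff_connected_and_card]
    simp only [hG, true_and, Nat.card_eq_fintype_card, ← edgeFinset_card, Fintype.card_fin]
    rw [hT]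
    omega
  have hcounts := sum_eq_and_forall_eq_or_eq_succ_iff G.nonPendant (fun v => G.degree v)
    (k := k) (by omega : r ≤ #G.nonPendant)
  rw [G.filter_nonPendant_degree_eq (by omega), G.filter_nonPendant_degree_eq (by omega)]
    at hcounts
  rw [← mZ2_eq_prod_nonPendant, hT] at hle heq
  rw [hT] at htree hcounts
  rw [natCard_mdeg_eq, natCard_mdeg_eq, heq, htree, ← hcounts]
  exact ⟨hle, and_self_left.symm⟩

theorem stmt9 (n p k r : ℕ) (hp : 2 ≤ p) (hn : p + 2 ≤ n)
    (hk : 2 ≤ k) (hr : r ≤ n - p - 1) (hkr : 2 * n - p - 2 = k * (n - p) + r)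
    (G : SimpleGraph (Fin n)) (hG : G.Connected)
    (hpend : Nat.card {v : Fin n | mdeg G v = 1} = p) :
    (k + 1) ^ (r * (k + 1)) * k ^ (k * (n - p - r)) ≤ mZ2 G ∧
      (mZ2 G = (k + 1) ^ (r * (k + 1)) * k ^ (k * (n - p - r)) ↔
        (G.IsTree ∧ Nat.card {v : Fin n | mdeg G v = k + 1} = r ∧
          Nat.card {v : Fin n | mdeg G v = k} = n - p - r)) :=
  stmt9_general n p k r hn hk hr hkr G hG hpend
end

section
/- Fix integers n, k with k ≥ 1, and a graph H on k vertices. For 1 ≤ j ≤ n−k−1 let G(j, n−k−j) = K_j ⊕ H ⊕ K_{n−k−j} be the graph on n vertices whose vertex set is partitioned into a clique A of size j, a copy of H on k vertices, and a clique C of size n−k−j, with every vertex of A adjacent to every vertex of H and every vertex of H adjacent to every vertex of C, and no edges between A and C. If 2 ≤ j ≤ (n−k)/2, then Π1(G(j, n−k−j)) < Π1(G(1, n−k−1)). -/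
/-! The vertices of `H` have degree `n - k + d_H(v)` whatever `j` is, so the claim reduces to
`(j+k-1)^j (n-j-1)^(n-k-j) < k (n-2)^(n-k-1)`. With `c = k - 1`, `s = n - k` and
`g(x) = (x+c)^x` this is `g(j) g(s-j) < g(1) g(s-1)`. Now `log g(x) = ψ(x + c)` for
`ψ(y) = (y - c) log y = y log y - c log y`, which is strictly convex on `y > 0`; pushing the pair
`(j, s-j)` apart to `(1, s-1)` while keeping its sum fixed therefore increases `g(j) g(s-j)`. -/

open SimpleGraph Finset

/-- The graph `K_j ⊕ H ⊕ K_{n-k-j}` on `Fin n`: the first `j` vertices form a clique,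
the next `k` vertices carry a copy of `H`, the last `n - k - j` vertices form a clique,
every vertex of the first clique is joined to every vertex of `H`, every vertex of `H`
is joined to every vertex of the second clique, and there are no edges between the
two cliques. -/
def Gjoin (n k j : ℕ) (H : SimpleGraph (Fin k)) : SimpleGraph (Fin n) :=
  SimpleGraph.fromRel (fun u v =>
    (u.val < j ∧ v.val < j) ∨
    (j + k ≤ u.val ∧ j + k ≤ v.val) ∨
    (u.val < j ∧ j ≤ v.val ∧ v.val < j + k) ∨
    (j + k ≤ u.val ∧ j ≤ v.val ∧ v.val < j + k) ∨
    (∃ a b : Fin k, u.val = j + a.val ∧ v.val = j + b.val ∧ H.Adj a b))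

open Real

theorem StrictConvexOn.map_add_map_lt_map_add_map {𝕜 : Type*} [Field 𝕜] [LinearOrder 𝕜]
    [IsStrictOrderedRing 𝕜] {s : Set 𝕜} {f : 𝕜 → 𝕜} (hf : StrictConvexOn 𝕜 s f)
    {p q r t : 𝕜} (hp : p ∈ s) (ht : t ∈ s) (hpq : p < q) (hqt : q < t) (hsum : q + r = p + t) :
    f q + f r < f p + f t := by
  obtain rfl : r = p + t - q := by linear_combination hsum
  have hpt : 0 < t - p := by linarith
  have ha : 0 < (t - q) / (t - p) := div_pos (by linarith) hpt
  have hb : 0 < (q - p) / (t - p) := div_pos (by linarith) hpt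
  have hab : (t - q) / (t - p) + (q - p) / (t - p) = 1 := by field_simp; ring
  have hq := hf.2 hp ht (hpq.trans hqt).ne ha hb hab
  have hr := hf.2 hp ht (hpq.trans hqt).ne hb ha (by linear_combination hab)
  have hq_comb : (t - q) / (t - p) * p + (q - p) / (t - p) * t = q := by field_simp; ring
  have hr_comb : (q - p) / (t - p) * p + (t - q) / (t - p) * t = p + t - q := by field_simp; ring
  simp only [smul_eq_mul, hq_comb, hr_comb] at hq hr
  linear_combination hq + hr + (f p + f t) * hab

theorem strictConvexOn_sub_mul_log {c : ℝ} (hc : 0 ≤ c) :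
    StrictConvexOn ℝ (Set.Ioi 0) fun x ↦ (x - c) * log x :=
  ((strictConvexOn_mul_log.subset Set.Ioi_subset_Ici_self (convex_Ioi 0)).add_convexOn
    (strictConcaveOn_log_Ioi.concaveOn.neg.smul hc)).congr fun x _ ↦ by
      simp only [Pi.add_apply, Pi.neg_apply, smul_eq_mul]; ring

theorem add_pow_self_mul_add_pow_self_lt (c : ℕ) {i j l m : ℕ} (hi : 0 < i + c) (hij : i < j)
    (hjm : j < m) (hsum : j + l = i + m) :
    (j + c) ^ j * (l + c) ^ l < (i + c) ^ i * (m + c) ^ m := by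
  have pos : ∀ x, i ≤ x → (0 : ℝ) < x + c := fun x hx ↦ by exact_mod_cast (by omega : 0 < x + c)
  have key := (strictConvexOn_sub_mul_log (Nat.cast_nonneg c)).map_add_map_lt_map_add_map
    (q := j + c) (r := l + c) (pos i le_rfl) (pos m (by omega))
    (by exact_mod_cast (by omega : i + c < j + c)) (by exact_mod_cast (by omega : j + c < m + c))
    (by exact_mod_cast (by omega : j + c + (l + c) = i + c + (m + c)))
  simp only [add_sub_cancel_right] at key
  have hj := pos j hij.le
  have hl := pos l (by omega)
  have hi' := pos i le_rfl
  have hm := pos m (by omega)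
  rw [← Nat.cast_lt (α := ℝ)]
  push_cast
  rw [← log_lt_log_iff (by positivity) (by positivity), log_mul (by positivity) (by positivity),
    log_mul (by positivity) (by positivity), log_pow, log_pow, log_pow, log_pow]
  exact key

theorem mdeg_eq_card_of_adj_iff {V : Type*} (G : SimpleGraph V) {v : V} {S : Finset V}
    (h : ∀ u, G.Adj v u ↔ u ∈ S) : mdeg G v = #S := by
  rw [mdeg, show G.neighborSet v = ↑S from Set.ext h, Nat.card_coe_set_eq, Set.ncard_coe_finset]

namespace Gjoin

variable {n k j : ℕ} {H : SimpleGraph (Fin k)}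

def middle (j : ℕ) (h : j + k ≤ n) : Fin k ↪ Fin n :=
  (Fin.natAddEmb j).trans (Fin.castLEEmb h)

@[simp]
theorem val_middle (h : j + k ≤ n) (a : Fin k) : (middle j h a : ℕ) = j + a := rfl

theorem mem_map_middle (h : j + k ≤ n) {u : Fin n} :
    u ∈ univ.map (middle j h) ↔ j ≤ u ∧ u < j + k := by
  simp only [mem_map, mem_univ, true_and, Fin.ext_iff, val_middle]
  exact ⟨by rintro ⟨a, ha⟩; omega, fun hu ↦ ⟨⟨u - j, by omega⟩, by simp; omega⟩⟩

theorem adj_iff_of_lt {u v : Fin n} (hv : v < j) :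
    (Gjoin n k j H).Adj v u ↔ u ≠ v ∧ u < j + k := by
  simp only [Gjoin, fromRel_adj, ne_comm (a := u)]
  refine and_congr_right fun _ ↦ ⟨?_, fun hu ↦ .inl ?_⟩
  · rintro (h | h) <;> omega
  · omega

theorem adj_iff_of_add_le {u v : Fin n} (hv : j + k ≤ v) :
    (Gjoin n k j H).Adj v u ↔ u ≠ v ∧ j ≤ u := by
  simp only [Gjoin, fromRel_adj, ne_comm (a := u)]
  refine and_congr_right fun _ ↦ ⟨?_, fun hu ↦ .inl ?_⟩
  · rintro (h | h) <;> omega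
  · omega

theorem adj_middle_middle_iff (h : j + k ≤ n) {a b : Fin k} :
    (Gjoin n k j H).Adj (middle j h a) (middle j h b) ↔ H.Adj a b := by
  simp only [Gjoin, fromRel_adj, ne_eq, (middle j h).injective.eq_iff, val_middle,
    Nat.add_left_cancel_iff, Fin.val_inj]
  have := a.isLt
  refine ⟨?_, fun hab ↦ ⟨hab.ne, .inl (.inr (.inr (.inr (.inr ⟨a, b, rfl, rfl, hab⟩))))⟩⟩
  rintro ⟨-, h | h⟩ <;> rcases h with h | h | h | h | ⟨a', b', rfl, rfl, hab⟩
  all_goals first | omega | exact hab | exact hab.symm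

theorem adj_middle_of_notMem (h : j + k ≤ n) {u : Fin n} (hu : u ∉ univ.map (middle j h))
    (a : Fin k) : (Gjoin n k j H).Adj (middle j h a) u := by
  rw [mem_map_middle] at hu
  simp only [Gjoin, fromRel_adj, val_middle, ne_eq, Fin.ext_iff]
  omega

theorem mdeg_of_lt (h : j + k ≤ n) {v : Fin n} (hv : v < j) :
    mdeg (Gjoin n k j H) v = j + k - 1 := by
  rw [mdeg_eq_card_of_adj_iff _ (S := ({u | u < j + k} : Finset (Fin n)).erase v) fun u ↦ by
      simp [adj_iff_of_lt hv], card_erase_of_mem (by simp; omega), Fin.card_filter_val_lt]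
  omega

theorem mdeg_of_add_le {v : Fin n} (hv : j + k ≤ v) :
    mdeg (Gjoin n k j H) v = n - j - 1 := by
  have hcard := card_filter_add_card_filter_not (s := univ) fun u : Fin n ↦ u < j
  rw [Fin.card_filter_val_lt, card_univ, Fintype.card_fin] at hcard
  rw [mdeg_eq_card_of_adj_iff _ (S := ({u | ¬ u < j} : Finset (Fin n)).erase v) fun u ↦ by
      simp [adj_iff_of_add_le hv], card_erase_of_mem (by simp; omega)]
  omega

theorem mdeg_middle (h : j + k ≤ n) (a : Fin k) :
    mdeg (Gjoin n k j H) (middle j h a) = n - k + mdeg H a := by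
  classical
  have hS : ∀ u, (Gjoin n k j H).Adj (middle j h a) u ↔
      u ∈ (univ.map (middle j h))ᶜ ∪ ({b | H.Adj a b} : Finset (Fin k)).map (middle j h) := by
    intro u
    by_cases hu : u ∈ univ.map (middle j h)
    · obtain ⟨b, -, rfl⟩ := mem_map.mp hu
      simp [adj_middle_middle_iff]
    · simp [hu, adj_middle_of_notMem h hu]
  have hdisj : Disjoint (univ.map (middle j h))ᶜ
      (({b | H.Adj a b} : Finset (Fin k)).map (middle j h)) :=
    disjoint_compl_left_iff.mpr (map_subset_map.mpr (subset_univ _))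
  rw [mdeg_eq_card_of_adj_iff _ hS, card_union_of_disjoint hdisj, card_compl, card_map, card_map,
    card_univ, Fintype.card_fin, Fintype.card_fin,
    mdeg_eq_card_of_adj_iff H (S := {b | H.Adj a b}) fun b ↦ by simp]

theorem mZ1_eq (h : j + k ≤ n) :
    mZ1 (Gjoin n k j H) =
      ((j + k - 1) ^ j * (n - j - 1) ^ (n - k - j)) ^ 2 * ∏ a, (n - k + mdeg H a) ^ 2 := by
  classical
  set M := univ.map (middle j h)
  have hM : ∀ u, u ∈ Mᶜ ↔ u < j ∨ j + k ≤ u := fun u ↦ by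
    rw [mem_compl, mem_map_middle]; omega
  have hleft : Mᶜ.filter (fun u : Fin n ↦ (u : ℕ) < j) = ({u | u < j} : Finset (Fin n)) := by
    ext u; simp only [mem_filter, hM, mem_univ, true_and]; omega
  have hcard := card_filter_add_card_filter_not (s := Mᶜ) fun u : Fin n ↦ (u : ℕ) < j
  rw [hleft, Fin.card_filter_val_lt, card_compl, card_map, card_univ, Fintype.card_fin,
    Fintype.card_fin] at hcard
  have hmiddle : ∏ u ∈ M, mdeg (Gjoin n k j H) u ^ 2 = ∏ a, (n - k + mdeg H a) ^ 2 := by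
    rw [prod_map]
    exact prod_congr rfl fun a _ ↦ by rw [mdeg_middle]
  have hA : ∏ u ∈ Mᶜ.filter (fun u : Fin n ↦ (u : ℕ) < j), mdeg (Gjoin n k j H) u ^ 2 =
      ((j + k - 1) ^ 2) ^ j := by
    rw [prod_eq_pow_card fun u hu ↦ by rw [mdeg_of_lt h (mem_filter.mp hu).2], hleft,
      Fin.card_filter_val_lt, min_eq_right (by omega)]
  have hC : ∏ u ∈ Mᶜ.filter (fun u : Fin n ↦ ¬ (u : ℕ) < j), mdeg (Gjoin n k j H) u ^ 2 =
      ((n - j - 1) ^ 2) ^ (n - k - j) := by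
    rw [prod_eq_pow_card fun u hu ↦ by
      rw [mem_filter, hM] at hu; rw [mdeg_of_add_le (by omega)]]
    congr 1; omega
  rw [mZ1, ← prod_mul_prod_compl M,
    ← prod_filter_mul_prod_filter_not Mᶜ fun u : Fin n ↦ (u : ℕ) < j, hmiddle, hA, hC]
  ring

end Gjoin

theorem stmt12 (n k j : ℕ) (hk : 1 ≤ k) (H : SimpleGraph (Fin k))
    (hj : 2 ≤ j) (hjn : 2 * j ≤ n - k) :
    mZ1 (Gjoin n k j H) < mZ1 (Gjoin n k 1 H) := by
  have key : (j + k - 1) ^ j * (n - j - 1) ^ (n - k - j) <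
      (1 + k - 1) ^ 1 * (n - 1 - 1) ^ (n - k - 1) := by
    convert add_pow_self_mul_add_pow_self_lt (k - 1) (i := 1) (l := n - k - j) (m := n - k - 1)
      (by omega) hj (by omega) (by omega) using 3 <;> omega
  rw [Gjoin.mZ1_eq (by omega), Gjoin.mZ1_eq (by omega)]
  exact Nat.mul_lt_mul_of_pos_right (Nat.pow_lt_pow_left key two_ne_zero)
    (prod_pos fun a _ ↦ pow_pos (by omega) 2)
end

section
/- Let G be a simple connected graph and let u, v be distinct non-adjacent vertices of G with d(u) ≥ d(v). Let v_1, …, v_s (with 1 ≤ s ≤ d(v)) be distinct neighbors of v that are not neighbors of u, and set G′ = G − {vv_1, …, vv_s} + {uv_1, …, uv_s}. Then Π2(G′) > Π2(G). -/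
open SimpleGraph Finset

/-!
Only the degrees of `u` and `v` change: each `w ∈ B` trades its neighbour `v` for `u`, so the pair of
degrees `(a, b)` with `a ≥ b` becomes `(a + s, b - s)`. Taking logarithms, `a ^ a * b ^ b` increases
because `x ↦ x log x` is strictly convex, and spreading two arguments of a strictly convex function
apart increases the sum of its values.
-/

theorem StrictConvexOn.add_lt_add_sub_add {𝕜 : Type*} [Field 𝕜] [LinearOrder 𝕜]
    [IsStrictOrderedRing 𝕜] {s : Set 𝕜} {f : 𝕜 → 𝕜} (hf : StrictConvexOn 𝕜 s f)
    {x y t : 𝕜} (hyt : y - t ∈ s) (hxt : x + t ∈ s) (ht : 0 < t) (hyx : y ≤ x) :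
    f x + f y < f (x + t) + f (y - t) := by
  suffices (f y - f (y - t)) / (y - (y - t)) < (f (x + t) - f x) / (x + t - x) by
    rw [sub_sub_cancel, add_sub_cancel_left, div_lt_div_iff_of_pos_right ht] at this
    linarith
  have hyt_lt : y - t < y := sub_lt_self y ht
  have hxt_lt : x < x + t := lt_add_of_pos_right x ht
  rcases hyx.eq_or_lt with rfl | hyx
  · exact hf.slope_strict_mono_adjacent hyt hxt hyt_lt hxt_lt
  · have hy : y ∈ s := hf.1.ordConnected.out hyt hxt ⟨hyt_lt.le, by linarith⟩
    calc (f y - f (y - t)) / (y - (y - t)) < (f x - f y) / (x - y) :=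
          hf.slope_strict_mono_adjacent hyt (hf.1.ordConnected.out hy hxt ⟨hyx.le, hxt_lt.le⟩)
            hyt_lt hyx
      _ < (f (x + t) - f x) / (x + t - x) := hf.slope_strict_mono_adjacent hy hxt hyx hxt_lt

theorem Real.log_natCast_pow_self_mul (m n : ℕ) :
    Real.log ((m ^ m * n ^ n : ℕ) : ℝ) = m * Real.log m + n * Real.log n := by
  have hpos : ∀ k : ℕ, ((k ^ k : ℕ) : ℝ) ≠ 0 := fun k => by exact_mod_cast Nat.pow_self_pos.ne'
  rw [Nat.cast_mul, Real.log_mul (hpos m) (hpos n), Nat.cast_pow, Nat.cast_pow, Real.log_pow,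
    Real.log_pow]

theorem Nat.pow_self_mul_pow_self_lt {a b s : ℕ} (hs : 0 < s) (hsb : s ≤ b) (hba : b ≤ a) :
    a ^ a * b ^ b < (a + s) ^ (a + s) * (b - s) ^ (b - s) := by
  obtain ⟨c, rfl⟩ := Nat.exists_eq_add_of_le' hsb
  have key := Real.strictConvexOn_mul_log.add_lt_add_sub_add (x := a) (y := c + s) (t := s)
    (by simp) (Set.mem_Ici.2 (by positivity)) (by exact_mod_cast hs) (by exact_mod_cast hba)
  have hpos : ∀ m n : ℕ, 0 < ((m ^ m * n ^ n : ℕ) : ℝ) := fun m n => by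
    exact_mod_cast Nat.mul_pos Nat.pow_self_pos Nat.pow_self_pos
  rw [Nat.add_sub_cancel, ← Nat.cast_lt (α := ℝ), ← Real.log_lt_log_iff (hpos _ _) (hpos _ _),
    Real.log_natCast_pow_self_mul, Real.log_natCast_pow_self_mul]
  push_cast
  simpa using key

theorem Finset.prod_lt_prod_of_eq_off_pair {ι R : Type*} [Fintype ι] [DecidableEq ι]
    [CommSemiring R] [PartialOrder R] [IsStrictOrderedRing R] {f g : ι → R} {i j : ι}
    (hij : i ≠ j) (hpos : ∀ k, k ≠ i → k ≠ j → 0 < f k)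
    (heq : ∀ k, k ≠ i → k ≠ j → f k = g k) (hlt : f i * f j < g i * g j) :
    ∏ k, f k < ∏ k, g k := by
  have hout : ∀ k ∈ univ \ {i, j}, k ≠ i ∧ k ≠ j := fun k hk => by simpa [not_or] using hk
  have hrest : ∏ k ∈ univ \ {i, j}, g k = ∏ k ∈ univ \ {i, j}, f k :=
    prod_congr rfl fun k hk => (heq k (hout k hk).1 (hout k hk).2).symm
  rw [← prod_sdiff (subset_univ {i, j}), ← prod_sdiff (f := g) (subset_univ {i, j}),
    prod_pair hij, prod_pair hij, hrest]
  exact mul_lt_mul_of_pos_left hlt (prod_pos fun k hk => hpos k (hout k hk).1 (hout k hk).2)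

theorem Sym2.mk_mem_image_mk_iff {α : Type*} {x y z : α} {B : Set α} :
    s(x, y) ∈ (fun w => s(z, w)) '' B ↔ x = z ∧ y ∈ B ∨ y = z ∧ x ∈ B := by
  simp only [Set.mem_image, Sym2.eq_iff]
  aesop

namespace SimpleGraph

variable {V : Type*} (G : SimpleGraph V)

def shiftNeighbors (v u : V) (B : Set V) : SimpleGraph V :=
  G.deleteEdges ((fun w => s(v, w)) '' B) ⊔ fromEdgeSet ((fun w => s(u, w)) '' B)

variable {G} {u v x y : V} {B : Set V}

theorem shiftNeighbors_adj : (G.shiftNeighbors v u B).Adj x y ↔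
    G.Adj x y ∧ ¬(x = v ∧ y ∈ B ∨ y = v ∧ x ∈ B) ∨ (x = u ∧ y ∈ B ∨ y = u ∧ x ∈ B) ∧ x ≠ y := by
  rw [shiftNeighbors, sup_adj, deleteEdges_adj, fromEdgeSet_adj, Sym2.mk_mem_image_mk_iff,
    Sym2.mk_mem_image_mk_iff]

theorem neighborSet_shiftNeighbors_target (huv : u ≠ v) (hu : u ∉ B) :
    (G.shiftNeighbors v u B).neighborSet u = G.neighborSet u ∪ B := by
  ext y
  simp only [mem_neighborSet, shiftNeighbors_adj, Set.mem_union]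
  aesop

theorem neighborSet_shiftNeighbors_source (huv : u ≠ v) (hv : v ∉ B) :
    (G.shiftNeighbors v u B).neighborSet v = G.neighborSet v \ B := by
  ext y
  simp only [mem_neighborSet, shiftNeighbors_adj, Set.mem_sdiff]
  aesop

theorem neighborSet_shiftNeighbors_of_mem (hxu : x ≠ u) (hxv : x ≠ v) (hx : x ∈ B) :
    (G.shiftNeighbors v u B).neighborSet x = insert u (G.neighborSet x \ {v}) := by
  ext y
  simp only [mem_neighborSet, shiftNeighbors_adj, Set.mem_insert_iff, Set.mem_sdiff,
    Set.mem_singleton_iff]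
  aesop

theorem neighborSet_shiftNeighbors_of_notMem (hxu : x ≠ u) (hxv : x ≠ v) (hx : x ∉ B) :
    (G.shiftNeighbors v u B).neighborSet x = G.neighborSet x := by
  ext y
  simp only [mem_neighborSet, shiftNeighbors_adj]
  aesop

theorem mdeg_eq_ncard (G : SimpleGraph V) (x : V) : mdeg G x = (G.neighborSet x).ncard :=
  Nat.card_coe_set_eq _

variable [Finite V] {B : Finset V}

theorem mdeg_shiftNeighbors_target (huv : u ≠ v) (hu : u ∉ B) (hBu : ∀ w ∈ B, ¬G.Adj u w) :
    mdeg (G.shiftNeighbors v u B) u = mdeg G u + #B := by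
  have hdisj : Disjoint (G.neighborSet u) B := Set.disjoint_left.2 fun w hw hwB => hBu w hwB hw
  rw [mdeg_eq_ncard, mdeg_eq_ncard, neighborSet_shiftNeighbors_target huv (mod_cast hu),
    Set.ncard_union_eq hdisj, Set.ncard_coe_finset]

theorem mdeg_shiftNeighbors_source (huv : u ≠ v) (hB : ↑B ⊆ G.neighborSet v) :
    mdeg (G.shiftNeighbors v u B) v = mdeg G v - #B := by
  rw [mdeg_eq_ncard, mdeg_eq_ncard, neighborSet_shiftNeighbors_source huv fun h => G.irrefl (hB h),
    Set.ncard_sdiff hB, Set.ncard_coe_finset]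

theorem mdeg_shiftNeighbors_of_ne (hxu : x ≠ u) (hxv : x ≠ v) (hB : ↑B ⊆ G.neighborSet v)
    (hBu : ∀ w ∈ B, ¬G.Adj u w) : mdeg (G.shiftNeighbors v u B) x = mdeg G x := by
  rw [mdeg_eq_ncard, mdeg_eq_ncard]
  by_cases hx : x ∈ B
  · have hvx : v ∈ G.neighborSet x := (hB hx).symm
    have hux : u ∉ G.neighborSet x \ {v} := fun h => hBu x hx h.1.symm
    rw [neighborSet_shiftNeighbors_of_mem hxu hxv (mod_cast hx), Set.ncard_insert_of_notMem hux,
      Set.ncard_sdiff_singleton_add_one hvx]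
  · rw [neighborSet_shiftNeighbors_of_notMem hxu hxv (mod_cast hx)]

end SimpleGraph

theorem stmt13_general {V : Type*} [Fintype V] (G : SimpleGraph V)
    (u v : V) (huv : u ≠ v) (hadj : ¬ G.Adj u v)
    (hdeg : mdeg G v ≤ mdeg G u)
    (B : Finset V) (hBne : B.Nonempty) (hB : (↑B : Set V) ⊆ G.neighborSet v)
    (hBu : ∀ w ∈ B, ¬ G.Adj u w) :
    mZ2 G <
      mZ2 (G.deleteEdges ((fun w => s(v, w)) '' (↑B : Set V)) ⊔
        SimpleGraph.fromEdgeSet ((fun w => s(u, w)) '' (↑B : Set V))) := by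
  classical
  change mZ2 G < mZ2 (G.shiftNeighbors v u B)
  have huB : u ∉ B := fun hu => hadj (hB hu).symm
  have hcard : #B ≤ mdeg G v := by
    rw [mdeg_eq_ncard, ← Set.ncard_coe_finset]
    exact Set.ncard_le_ncard hB
  refine prod_lt_prod_of_eq_off_pair huv (fun x _ _ => Nat.pow_self_pos) (fun x hxu hxv => ?_) ?_
  · rw [mdeg_shiftNeighbors_of_ne hxu hxv hB hBu]
  · rw [mdeg_shiftNeighbors_target huv huB hBu, mdeg_shiftNeighbors_source huv hB]
    exact Nat.pow_self_mul_pow_self_lt (card_pos.2 hBne) hcard hdeg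

theorem stmt13 {V : Type*} [Fintype V] (G : SimpleGraph V) (hG : G.Connected)
    (u v : V) (huv : u ≠ v) (hadj : ¬ G.Adj u v)
    (hdeg : mdeg G v ≤ mdeg G u)
    (B : Finset V) (hBne : B.Nonempty) (hB : (↑B : Set V) ⊆ G.neighborSet v)
    (hBu : ∀ w ∈ B, ¬ G.Adj u w) :
    mZ2 G <
      mZ2 (G.deleteEdges ((fun w => s(v, w)) '' (↑B : Set V)) ⊔
        SimpleGraph.fromEdgeSet ((fun w => s(u, w)) '' (↑B : Set V))) :=
  stmt13_general G u v huv hadj hdeg B hBne hB hBu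
end

section
/- Fix integers n, k with k ≥ 1, and a graph H on k vertices. For 1 ≤ j ≤ n−k−1 let G(j, n−k−j) = K_j ⊕ H ⊕ K_{n−k−j} be the graph on n vertices whose vertex set is partitioned into a clique A of size j, a copy of H on k vertices, and a clique C of size n−k−j, with every vertex of A adjacent to every vertex of H and every vertex of H adjacent to every vertex of C, and no edges between A and C. If 2 ≤ j ≤ (n−k)/2, then Π2(G(j, n−k−j)) < Π2(G(1, n−k−1)). -/
open SimpleGraph Finset

/-!
Write `n = j + k + r`. In `G(j, r)` the vertices of `K_j` have degree `j + k - 1`, those of `K_r`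
degree `r + k - 1`, and a vertex `a` of `H` has degree `n - k + d_H(a)`, whatever the split.
Hence `Π₂(G(j, r)) = cliquePow k j * cliquePow k r * P` with `P` independent of `j`, and
`log (cliquePow k x) = h(x) := x (x + k - 1) log (x + k - 1)`. The derivative
`(2x + k - 1) log (x + k - 1) + x` is strictly increasing on `[1, ∞)`, so `h` is strictly convex
there; as `(j, r)` lies strictly inside `(1, j + r - 1)` with the same sum,
`h(j) + h(r) < h(1) + h(j + r - 1)`.
-/

open Real

section Convexity

open Set

theorem StrictConvexOn.map_add_map_lt {s : Set ℝ} {f : ℝ → ℝ} (hf : StrictConvexOn ℝ s f)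
    {a b x y : ℝ} (ha : a ∈ s) (hb : b ∈ s) (hax : a < x) (hxy : x ≤ y)
    (hsum : x + y = a + b) : f x + f y < f a + f b := by
  have hab : a < b := by linarith
  have hba : b - a ≠ 0 := by linarith
  set θ := (b - x) / (b - a) with hθ
  have hθ₀ : 0 < θ := div_pos (by linarith) (by linarith)
  have hθ₁ : 0 < 1 - θ := by
    rw [hθ, one_sub_div hba]
    exact div_pos (by linarith) (by linarith)
  have hx : θ • a + (1 - θ) • b = x := by
    rw [smul_eq_mul, smul_eq_mul, hθ]
    field_simp
    ring
  have hy : (1 - θ) • a + θ • b = y := by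
    rw [smul_eq_mul, smul_eq_mul, hθ]
    field_simp
    linear_combination (a - b) * hsum
  have h₁ := hf.2 ha hb hab.ne hθ₀ hθ₁ (by ring)
  have h₂ := hf.2 ha hb hab.ne hθ₁ hθ₀ (by ring)
  rw [hx] at h₁
  rw [hy] at h₂
  simp only [smul_eq_mul] at h₁ h₂
  linarith

theorem strictConvexOn_mul_mul_log_add {c : ℝ} (hc : 0 ≤ c) :
    StrictConvexOn ℝ (Ici 1) fun x => x * (x + c) * log (x + c) := by
  have hderiv : ∀ x ∈ Ioi (1 : ℝ),
      deriv (fun x => x * (x + c) * log (x + c)) x = (2 * x + c) * log (x + c) + x := by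
    intro x hx
    have hxc : x + c ≠ 0 := by
      rw [Set.mem_Ioi] at hx
      linarith
    refine ((((hasDerivAt_id x).mul ((hasDerivAt_id x).add_const c)).mul
      (((hasDerivAt_id x).add_const c).log hxc))).deriv.trans ?_
    simp only [id, Pi.mul_apply]
    field_simp
    ring
  refine StrictMonoOn.strictConvexOn_of_deriv (convex_Ici 1) ?_ ?_
  · refine ContinuousOn.mul (by fun_prop) (ContinuousOn.log (by fun_prop) fun x hx => ?_)
    rw [Set.mem_Ici] at hx
    linarith
  · rw [interior_Ici]
    intro x hx y hy hxy
    rw [Set.mem_Ioi] at hx hy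
    rw [hderiv x hx, hderiv y hy]
    have hlog : log (x + c) ≤ log (y + c) := log_le_log (by linarith) (by linarith)
    have hlog₀ : 0 ≤ log (x + c) := log_nonneg (by linarith)
    nlinarith

end Convexity

def cliquePow (k x : ℕ) : ℕ :=
  (x + k - 1) ^ ((x + k - 1) * x)

lemma cliquePow_pos (k x : ℕ) : 0 < cliquePow k x := by
  rcases Nat.eq_zero_or_pos (x + k - 1) with h | h
  · simp [cliquePow, h]
  · exact pow_pos h _

lemma log_cliquePow {k : ℕ} (hk : 1 ≤ k) (x : ℕ) :
    log (cliquePow k x) = x * (x + (k - 1 : ℝ)) * log (x + (k - 1 : ℝ)) := by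
  rw [cliquePow, Nat.cast_pow, Real.log_pow, Nat.cast_mul, Nat.cast_sub (by omega)]
  push_cast
  simp only [add_sub_assoc]
  ring

theorem cliquePow_mul_cliquePow_lt {k i j r : ℕ} (hk : 1 ≤ k) (hi : 1 ≤ i) (hij : i < j)
    (hjr : j ≤ r) :
    cliquePow k j * cliquePow k r < cliquePow k i * cliquePow k (j + r - i) := by
  have hpos (x : ℕ) : (0 : ℝ) < cliquePow k x := Nat.cast_pos.2 (cliquePow_pos k x)
  rw [← Nat.cast_lt (α := ℝ), Nat.cast_mul, Nat.cast_mul,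
    ← log_lt_log_iff (mul_pos (hpos _) (hpos _)) (mul_pos (hpos _) (hpos _)),
    log_mul (hpos _).ne' (hpos _).ne', log_mul (hpos _).ne' (hpos _).ne']
  simp only [log_cliquePow hk, Nat.cast_sub (by omega : i ≤ j + r), Nat.cast_add]
  have hk' : (0 : ℝ) ≤ k - 1 := by
    rw [sub_nonneg]
    exact_mod_cast hk
  have hi' : (1 : ℝ) ≤ i := by exact_mod_cast hi
  have hij' : (i : ℝ) < j := by exact_mod_cast hij
  have hjr' : (j : ℝ) ≤ r := by exact_mod_cast hjr
  exact (strictConvexOn_mul_mul_log_add hk').map_add_map_lt (Set.mem_Ici.2 hi')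
    (Set.mem_Ici.2 (by linarith)) hij' hjr' (by ring)

lemma mdeg_eq_card {V : Type*} {G : SimpleGraph V} {v : V} {s : Finset V}
    (hs : ∀ u, u ∈ s ↔ G.Adj v u) : mdeg G v = #s := by
  rw [mdeg, ← Nat.card_eq_finsetCard]
  congr
  ext u
  simp [hs]

lemma Fin.card_filter_le_val {n m : ℕ} (hm : m ≤ n) : #{u : Fin n | m ≤ u.val} = n - m := by
  have h := card_filter_add_card_filter_not (s := univ) (fun u : Fin n => u.val < m)
  simp only [Fin.card_filter_val_lt, not_lt, card_univ, Fintype.card_fin] at h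
  omega

section Gjoin

variable {n k j : ℕ} {H : SimpleGraph (Fin k)}

lemma Gjoin_adj_of_lt {v u : Fin n} (hv : v.val < j) :
    (Gjoin n k j H).Adj v u ↔ u ≠ v ∧ u.val < j + k := by
  simp only [Gjoin, fromRel_adj]
  constructor
  · rintro ⟨hne, h | h⟩ <;> refine ⟨Ne.symm hne, ?_⟩ <;> grind
  · grind

lemma Gjoin_adj_of_le {v u : Fin n} (hv : j + k ≤ v.val) :
    (Gjoin n k j H).Adj v u ↔ u ≠ v ∧ j ≤ u.val := by
  simp only [Gjoin, fromRel_adj]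
  constructor
  · rintro ⟨hne, h | h⟩ <;> refine ⟨Ne.symm hne, ?_⟩ <;> grind
  · grind

lemma Gjoin_adj_of_eq_add {v u : Fin n} {a : Fin k} (hv : v.val = j + a.val) :
    (Gjoin n k j H).Adj v u ↔
      u.val < j ∨ j + k ≤ u.val ∨ ∃ b : Fin k, u.val = j + b.val ∧ H.Adj a b := by
  simp only [Gjoin, fromRel_adj]
  grind [H.loopless.irrefl, H.adj_comm]

lemma mdeg_Gjoin_of_lt (hn : j + k ≤ n) {v : Fin n} (hv : v.val < j) :
    mdeg (Gjoin n k j H) v = j + k - 1 := by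
  rw [mdeg_eq_card (s := ({u | u.val < j + k} : Finset (Fin n)).erase v)
      (by simp [Gjoin_adj_of_lt hv]),
    card_erase_of_mem (mem_filter.2 ⟨mem_univ v, by omega⟩), Fin.card_filter_val_lt,
    min_eq_right hn]

lemma mdeg_Gjoin_of_le {v : Fin n} (hv : j + k ≤ v.val) :
    mdeg (Gjoin n k j H) v = n - j - 1 := by
  rw [mdeg_eq_card (s := ({u | j ≤ u.val} : Finset (Fin n)).erase v)
      (by simp [Gjoin_adj_of_le hv]),
    card_erase_of_mem (mem_filter.2 ⟨mem_univ v, by omega⟩), Fin.card_filter_le_val (by omega)]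

lemma mdeg_Gjoin_of_eq_add (hn : j + k ≤ n) {v : Fin n} {a : Fin k} (hv : v.val = j + a.val) :
    mdeg (Gjoin n k j H) v = n - k + mdeg H a := by
  classical
  let e : Fin k ↪ Fin n := (Fin.natAddEmb j).trans (Fin.castLEEmb hn)
  have he (b : Fin k) (u : Fin n) : e b = u ↔ u.val = j + b.val := by
    simp [e, Fin.ext_iff, eq_comm]
  let A : Finset (Fin n) := {u | u.val < j}
  let C : Finset (Fin n) := {u | j + k ≤ u.val}
  let N : Finset (Fin k) := {b | H.Adj a b}
  have hAC : Disjoint A C := disjoint_filter.2 fun u _ h₁ h₂ => by omega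
  have hACN : Disjoint (A ∪ C) (N.map e) := by
    refine disjoint_left.2 fun u hu hu' => ?_
    obtain ⟨b, -, rfl⟩ := mem_map.1 hu'
    have := (he b _).1 rfl
    simp only [A, C, mem_union, mem_filter, mem_univ, true_and] at hu
    omega
  rw [mdeg_eq_card (s := A ∪ C ∪ N.map e)
      (by simp [A, C, N, Gjoin_adj_of_eq_add hv, he, and_comm]),
    mdeg_eq_card (s := N) (by simp [N]),
    card_union_of_disjoint hACN, card_union_of_disjoint hAC, card_map,
    Fin.card_filter_val_lt, Fin.card_filter_le_val hn]
  omega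

lemma mZ2_Gjoin {r : ℕ} (hn : j + k + r = n) :
    mZ2 (Gjoin n k j H) =
      cliquePow k j * cliquePow k r * ∏ a : Fin k, (n - k + mdeg H a) ^ (n - k + mdeg H a) := by
  subst hn
  have hA (i : Fin j) : mdeg (Gjoin _ k j H) (Fin.castAdd r (Fin.castAdd k i)) = j + k - 1 :=
    mdeg_Gjoin_of_lt (by omega) (by simp)
  have hH (a : Fin k) :
      mdeg (Gjoin _ k j H) (Fin.castAdd r (Fin.natAdd j a)) = j + k + r - k + mdeg H a :=
    mdeg_Gjoin_of_eq_add (by omega) (by simp)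
  have hC (i : Fin r) : mdeg (Gjoin _ k j H) (Fin.natAdd (j + k) i) = r + k - 1 :=
    (mdeg_Gjoin_of_le (by simp)).trans (by omega)
  rw [mZ2, Fin.prod_univ_add, Fin.prod_univ_add]
  simp only [hA, hH, hC, Fin.prod_const, cliquePow, ← pow_mul]
  ring

end Gjoin

theorem stmt14 (n k j : ℕ) (hk : 1 ≤ k) (H : SimpleGraph (Fin k))
    (hj : 2 ≤ j) (hjn : 2 * j ≤ n - k) :
    mZ2 (Gjoin n k j H) < mZ2 (Gjoin n k 1 H) := by
  obtain ⟨r, hn⟩ : ∃ r, j + k + r = n := ⟨n - k - j, by omega⟩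
  rw [mZ2_Gjoin hn, mZ2_Gjoin (r := j + r - 1) (by omega)]
  have hP : 0 < ∏ a : Fin k, (n - k + mdeg H a) ^ (n - k + mdeg H a) :=
    prod_pos fun a _ => pow_pos (by omega) _
  exact Nat.mul_lt_mul_of_pos_right
    (cliquePow_mul_cliquePow_lt hk le_rfl (by omega) (by omega)) hP
end

section
/- Let G be a simple connected graph and let v_1, v_2 be distinct vertices of G with d(v_1) = n_1 + 2 and d(v_2) = n_2 + 2 where n_1, n_2 ≥ 1. Let B be a set of n_2 neighbors of v_2, none of which is v_1 or a neighbor of v_1, and let G_1 = G − {v_2 w : w ∈ B} + {v_1 w : w ∈ B} (so that in G_1 vertex v_1 has degree n_1 + n_2 + 2, vertex v_2 has degree 2, and all other degrees are unchanged). Then Π1(G_1) < Π1(G). -/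
open SimpleGraph Finset

/-!
Moving the edges `v₂w`, `w ∈ B`, over to `v₁` changes only the degrees of `v₁` and `v₂`, from
`(n₁ + 2, n₂ + 2)` to `(n₁ + n₂ + 2, 2)`. Since `(n₁ + n₂ + 2) * 2 = (n₁ + 2) * (n₂ + 2) - n₁ * n₂`,
the product of these two degrees strictly drops, and the remaining factors of `Π₁` are unchanged
and positive because a connected graph on at least two vertices has no isolated vertex.
-/

namespace SimpleGraph
variable {V : Type*} (G : SimpleGraph V)

def moveEdges (u v : V) (B : Set V) : SimpleGraph V :=
  G.deleteEdges ((fun w => s(u, w)) '' B) ⊔ fromEdgeSet ((fun w => s(v, w)) '' B)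

variable {G} {u v w x y : V} {B : Set V}

theorem moveEdges_adj : (G.moveEdges u v B).Adj x y ↔
    G.Adj x y ∧ ¬(x = u ∧ y ∈ B) ∧ ¬(y = u ∧ x ∈ B) ∨
      x ≠ y ∧ (x = v ∧ y ∈ B ∨ y = v ∧ x ∈ B) := by
  simp only [moveEdges, sup_adj, deleteEdges_adj, fromEdgeSet_adj, Set.mem_image, Sym2.eq_iff]
  grind

theorem neighborSet_moveEdges_target (hvB : v ∉ B) :
    (G.moveEdges u v B).neighborSet v = G.neighborSet v ∪ B := by
  ext y
  simp only [mem_neighborSet, moveEdges_adj, Set.mem_union]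
  grind [G.ne_of_adj]

theorem neighborSet_moveEdges_source (huv : u ≠ v) (huB : u ∉ B) :
    (G.moveEdges u v B).neighborSet u = G.neighborSet u \ B := by
  ext y
  simp only [mem_neighborSet, moveEdges_adj, Set.mem_sdiff]
  grind

theorem neighborSet_moveEdges_of_mem (hwu : w ≠ u) (hwv : w ≠ v) (hw : w ∈ B) :
    (G.moveEdges u v B).neighborSet w = insert v (G.neighborSet w \ {u}) := by
  ext y
  simp only [mem_neighborSet, moveEdges_adj, Set.mem_insert_iff, Set.mem_sdiff,
    Set.mem_singleton_iff]
  grind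

theorem neighborSet_moveEdges_of_notMem (hwu : w ≠ u) (hwv : w ≠ v) (hw : w ∉ B) :
    (G.moveEdges u v B).neighborSet w = G.neighborSet w := by
  ext y
  simp only [mem_neighborSet, moveEdges_adj]
  grind

section Degree
variable [Finite V]

theorem mdeg_moveEdges_target (hvB : v ∉ B) (hB : ∀ w ∈ B, ¬G.Adj v w) :
    mdeg (G.moveEdges u v B) v = mdeg G v + B.ncard := by
  simp only [mdeg, Nat.card_coe_set_eq]
  rw [neighborSet_moveEdges_target hvB, Set.ncard_union_eq]
  exact Set.disjoint_left.mpr fun w hv hw => hB w hw hv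

theorem mdeg_moveEdges_source (huv : u ≠ v) (huB : u ∉ B) (hB : B ⊆ G.neighborSet u) :
    mdeg (G.moveEdges u v B) u = mdeg G u - B.ncard := by
  simp only [mdeg, Nat.card_coe_set_eq]
  rw [neighborSet_moveEdges_source huv huB, Set.ncard_sdiff hB]

theorem mdeg_moveEdges_of_ne (hwu : w ≠ u) (hwv : w ≠ v) (hB : B ⊆ G.neighborSet u)
    (hBv : ∀ w ∈ B, ¬G.Adj v w) : mdeg (G.moveEdges u v B) w = mdeg G w := by
  simp only [mdeg, Nat.card_coe_set_eq]
  by_cases hw : w ∈ B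
  · have huw : u ∈ G.neighborSet w := (hB hw).symm
    rw [neighborSet_moveEdges_of_mem hwu hwv hw,
      Set.ncard_insert_of_notMem fun h => hBv w hw h.1.symm,
      Set.ncard_sdiff_singleton_add_one huw]
  · rw [neighborSet_moveEdges_of_notMem hwu hwv hw]

theorem Connected.mdeg_pos [Nontrivial V] (hG : G.Connected) (v : V) : 0 < mdeg G v := by
  obtain ⟨w, hw⟩ := hG.preconnected.exists_adj_of_nontrivial v
  exact Nat.card_pos_iff.mpr ⟨⟨⟨w, hw⟩⟩, inferInstance⟩

end Degree

end SimpleGraph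

theorem Finset.prod_lt_prod_of_lt_on_pair {ι R : Type*} [Fintype ι] [DecidableEq ι]
    [CommSemiring R] [PartialOrder R] [IsStrictOrderedRing R] {f g : ι → R} {a b : ι}
    (hab : a ≠ b) (hlt : f a * f b < g a * g b) (heq : ∀ i, i ≠ a → i ≠ b → f i = g i)
    (hpos : ∀ i, 0 < g i) : ∏ i, f i < ∏ i, g i := by
  have hsplit (h : ι → R) : ∏ i, h i = (∏ i ∈ univ \ {a, b}, h i) * (h a * h b) := by
    rw [← prod_sdiff (subset_univ {a, b}), prod_pair hab]
  have hrest : ∏ i ∈ univ \ {a, b}, f i = ∏ i ∈ univ \ {a, b}, g i :=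
    prod_congr rfl fun i hi => by simp only [mem_sdiff, mem_insert, mem_singleton] at hi; grind
  rw [hsplit f, hsplit g, hrest]
  exact mul_lt_mul_of_pos_left hlt (prod_pos fun i _ => hpos i)

theorem stmt15 {V : Type*} [Fintype V] (G : SimpleGraph V) (hG : G.Connected)
    (v₁ v₂ : V) (hne : v₁ ≠ v₂) (n₁ n₂ : ℕ) (hn₁ : 1 ≤ n₁) (hn₂ : 1 ≤ n₂)
    (hd₁ : mdeg G v₁ = n₁ + 2) (hd₂ : mdeg G v₂ = n₂ + 2)
    (B : Finset V) (hBcard : B.card = n₂) (hB : (↑B : Set V) ⊆ G.neighborSet v₂)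
    (hBv₁ : v₁ ∉ B) (hBadj : ∀ w ∈ B, ¬ G.Adj v₁ w) :
    mZ1 (G.deleteEdges ((fun w => s(v₂, w)) '' (↑B : Set V)) ⊔
        SimpleGraph.fromEdgeSet ((fun w => s(v₁, w)) '' (↑B : Set V))) < mZ1 G := by
  classical
  change mZ1 (G.moveEdges v₂ v₁ B) < mZ1 G
  have : Nontrivial V := ⟨v₁, v₂, hne⟩
  have hv₂B : v₂ ∉ B := fun h => G.irrefl (hB h)
  have hBn : (B : Set V).ncard = n₂ := by rw [Set.ncard_coe_finset, hBcard]
  have hd₁' : mdeg (G.moveEdges v₂ v₁ B) v₁ = n₁ + n₂ + 2 := by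
    rw [mdeg_moveEdges_target hBv₁ hBadj, hd₁, hBn]; ring
  have hd₂' : mdeg (G.moveEdges v₂ v₁ B) v₂ = 2 := by
    rw [mdeg_moveEdges_source hne.symm hv₂B hB, hd₂, hBn]; omega
  refine prod_lt_prod_of_lt_on_pair hne ?_
    (fun w hw₁ hw₂ => by rw [mdeg_moveEdges_of_ne hw₂ hw₁ hB hBadj])
    (fun w => pow_pos (hG.mdeg_pos w) 2)
  rw [hd₁', hd₂', hd₁, hd₂, ← mul_pow, ← mul_pow]
  exact Nat.pow_lt_pow_left (by nlinarith) two_ne_zero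
end

section
/- For every real number m ≥ 0, the function F_1(x) = (x+m)^x / (x+m−1)^{x−1} is strictly monotonically increasing on the set of real x with x > 0 and x + m > 1; that is, if 1 − m < x < y with x > 0, then (x+m)^x / (x+m−1)^{x−1} < (y+m)^y / (y+m−1)^{y−1}. -/
/-!
Write `φ s = s * log (s + m)`, so that `(t + m) ^ t / (t + m - 1) ^ (t - 1) = exp (φ t - φ (t - 1))`.
Since `φ' s = log (s + m) + s / (s + m) = log (s + m) + 1 - m / (s + m)` is strictly increasing
for `m ≥ 0`, the increment `φ t - φ (t - 1)` has derivative `φ' t - φ' (t - 1) > 0`.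
-/

open Real Set

lemma strictMonoOn_sub_comp_sub_of_hasDerivAt {φ φ' : ℝ → ℝ} {c h : ℝ} (hh : 0 < h)
    (hφ : ∀ t ∈ Ioi c, HasDerivAt φ (φ' t) t) (hφ' : StrictMonoOn φ' (Ioi c)) :
    StrictMonoOn (fun t => φ t - φ (t - h)) (Ioi (c + h)) := by
  have hmem : ∀ t ∈ Ioi (c + h), t ∈ Ioi c ∧ t - h ∈ Ioi c := fun t ht => by
    simp only [mem_Ioi] at ht ⊢
    constructor <;> linarith
  have hderiv : ∀ t ∈ Ioi (c + h),
      HasDerivAt (fun t => φ t - φ (t - h)) (φ' t - φ' (t - h)) t := fun t ht =>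
    (hφ t (hmem t ht).1).sub ((hφ (t - h) (hmem t ht).2).comp_sub_const t h)
  refine strictMonoOn_of_hasDerivWithinAt_pos (f' := fun t => φ' t - φ' (t - h)) (convex_Ioi _)
    (fun t ht => (hderiv t ht).continuousAt.continuousWithinAt) (fun t ht => ?_) (fun t ht => ?_)
    <;> rw [interior_Ioi] at ht
  · exact (hderiv t ht).hasDerivWithinAt
  · exact sub_pos.2 (hφ' (hmem t ht).2 (hmem t ht).1 (sub_lt_self t hh))

lemma hasDerivAt_mul_log_add {a t : ℝ} (h : 0 < t + a) :
    HasDerivAt (fun s => s * log (s + a)) (log (t + a) + t / (t + a)) t :=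
  ((hasDerivAt_id' t).fun_mul (((hasDerivAt_id' t).add_const a).log h.ne')).congr_deriv
    (by ring)

lemma strictMonoOn_log_add_add_div_add {a : ℝ} (ha : 0 ≤ a) :
    StrictMonoOn (fun s => log (s + a) + s / (s + a)) (Ioi (-a)) := by
  intro s hs t ht hst
  simp only [mem_Ioi] at hs ht
  have hlog : log (s + a) < log (t + a) := log_lt_log (by linarith) (by linarith)
  have hdiv : s / (s + a) ≤ t / (t + a) := by
    rw [div_le_div_iff₀ (by linarith) (by linarith)]
    nlinarith
  exact add_lt_add_of_lt_of_le hlog hdiv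

lemma rpow_div_rpow_sub_one_eq_exp {m t : ℝ} (h : 0 < t + m - 1) :
    (t + m) ^ t / (t + m - 1) ^ (t - 1) = exp (t * log (t + m) - (t - 1) * log (t - 1 + m)) := by
  rw [rpow_def_of_pos (by linarith), rpow_def_of_pos h, ← exp_sub, sub_add_eq_add_sub]
  ring_nf

theorem stmt17_general (m x y : ℝ) (hm : 0 ≤ m) (hxm : 1 - m < x) (hxy : x < y) :
    (x + m) ^ x / (x + m - 1) ^ (x - 1) < (y + m) ^ y / (y + m - 1) ^ (y - 1) := by
  have hmono : StrictMonoOn (fun t => t * log (t + m) - (t - 1) * log (t - 1 + m))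
      (Ioi (-m + 1)) :=
    strictMonoOn_sub_comp_sub_of_hasDerivAt one_pos
      (fun t ht => hasDerivAt_mul_log_add (neg_lt_iff_pos_add.1 ht))
      (strictMonoOn_log_add_add_div_add hm)
  have hx : x ∈ Ioi (-m + 1) := by simp only [mem_Ioi]; linarith
  have hy : y ∈ Ioi (-m + 1) := by simp only [mem_Ioi]; linarith
  rw [rpow_div_rpow_sub_one_eq_exp (by linarith), rpow_div_rpow_sub_one_eq_exp (by linarith),
    exp_lt_exp]
  exact hmono hx hy hxy

theorem stmt17 (m x y : ℝ) (hm : 0 ≤ m) (hx : 0 < x) (hxm : 1 - m < x) (hxy : x < y) :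
    (x + m) ^ x / (x + m - 1) ^ (x - 1) < (y + m) ^ y / (y + m - 1) ^ (y - 1) :=
  stmt17_general m x y hm hxm hxy
end

section
/- For every real number m > 0, the function F_2(x) = x^x / (x+m)^{x+m} is strictly decreasing on the interval (0, ∞); that is, if 0 < x < y, then x^x / (x+m)^{x+m} > y^y / (y+m)^{y+m}. -/
/-!
Taking logarithms, `x ^ x / (x + m) ^ (x + m) = exp (φ x - φ (x + m))` with `φ t = t log t`.
The difference `φ t - φ (t + m)` has derivative `log t - log (t + m) < 0`, so it is strictly
decreasing, and so is its exponential.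
-/

open Real Set

theorem strictAntiOn_mul_log_sub_mul_log_add {m : ℝ} (hm : 0 < m) :
    StrictAntiOn (fun t : ℝ => t * log t - (t + m) * log (t + m)) (Ici 0) := by
  refine strictAntiOn_of_deriv_neg (convex_Ici 0) ?_ fun t ht => ?_
  · exact (continuous_mul_log.sub (continuous_mul_log.comp (continuous_add_const m))).continuousOn
  · rw [interior_Ici] at ht
    have ht : 0 < t := ht
    have htm : 0 < t + m := by linarith
    have hderiv : HasDerivAt (fun t : ℝ => t * log t - (t + m) * log (t + m))
        (log t + 1 - (log (t + m) + 1)) t :=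
      (hasDerivAt_mul_log ht.ne').sub ((hasDerivAt_mul_log htm.ne').comp_add_const t m)
    rw [hderiv.deriv]
    linarith [log_lt_log ht (lt_add_of_pos_right t hm)]

theorem rpow_self_div_rpow_self_add {m t : ℝ} (ht : 0 < t) (htm : 0 < t + m) :
    t ^ t / (t + m) ^ (t + m) = exp (t * log t - (t + m) * log (t + m)) := by
  rw [rpow_def_of_pos ht, rpow_def_of_pos htm, ← exp_sub, mul_comm (log t), mul_comm (log (t + m))]

theorem stmt18 (m x y : ℝ) (hm : 0 < m) (hx : 0 < x) (hxy : x < y) :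
    y ^ y / (y + m) ^ (y + m) < x ^ x / (x + m) ^ (x + m) := by
  have hy : 0 < y := hx.trans hxy
  rw [rpow_self_div_rpow_self_add hx (by linarith), rpow_self_div_rpow_self_add hy (by linarith),
    exp_lt_exp]
  exact strictAntiOn_mul_log_sub_mul_log_add hm hx.le hy.le hxy
end
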